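/- arXiv:2407.04807 — 8 statements merged into one kernel-verified Lean document; each statement's English description precedes it below -/
import Mathlib

section
/- There is no permutation σ of the set {1,…,m} such that σ has no fixed points, and σ∘σ has exactly two non-fixed points (i.e., there exist distinct b₁, b₂ with σ(σ(bᵢ)) ≠ bᵢ for i = 1,2, while σ(σ(t)) = t for every t ∉ {b₁,b₂}). -/
/-- There is no permutation `σ` of `{1,…,m}` (here modeled as `Fin m`) such that
`σ` has no fixed points while `σ ∘ σ` has exactly two non-fixed points. -/
theorem no_fixed_point_free_perm_with_two_square_nonfixed (m : ℕ) :
    ¬ ∃ σ : Equiv.Perm (Fin m),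
      (∀ x, σ x ≠ x) ∧
      ∃ b₁ b₂ : Fin m, b₁ ≠ b₂ ∧
        σ (σ b₁) ≠ b₁ ∧ σ (σ b₂) ≠ b₂ ∧
        ∀ t : Fin m, t ≠ b₁ → t ≠ b₂ → σ (σ t) = t := by
  rintro ⟨σ, hnf, b₁, b₂, hne, h1, h2, hfix⟩
  have sb1 : σ b₁ = b₂ := by
    by_contra hc
    exact h1 (σ.injective (hfix (σ b₁) (hnf b₁) hc))
  have sb2 : σ b₂ = b₁ := by
    by_contra hc
    exact h2 (σ.injective (hfix (σ b₂) hc (hnf b₂)))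
  exact h1 (by rw [sb1, sb2])
end

section
/- For every integer m ≥ 2, the maximum over all permutations σ of {1,…,m} of the number of triples (x,y,z) ∈ {1,…,m}³ with y ≠ x, z ≠ x, and z ≠ σ(y) equals (m−1)³ + 1. -/
open Finset

private lemma count_plus_fix (k : ℕ) (σ : Equiv.Perm (Fin (k + 2))) :
    (Finset.univ.filter (fun p : Fin (k + 2) × Fin (k + 2) × Fin (k + 2) =>
        p.2.1 ≠ p.1 ∧ p.2.2 ≠ p.1 ∧ p.2.2 ≠ σ p.2.1)).card
      + (Finset.univ.filter fun x : Fin (k + 2) => σ x = x).card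
      = (k + 1) ^ 3 + 1 := by
  classical
  -- inner count over z
  have hz : ∀ x c : Fin (k + 2), (univ.filter fun z : Fin (k + 2) => z ≠ x ∧ z ≠ c).card
      = if c = x then k + 1 else k := by
    intro x c
    have hset : (univ.filter fun z : Fin (k + 2) => z ≠ x ∧ z ≠ c)
        = ({x, c} : Finset (Fin (k + 2)))ᶜ := by
      ext z; simp [not_or]
    rw [hset, card_compl, Fintype.card_fin]
    by_cases h : c = x
    · subst h
      rw [if_pos rfl, Finset.insert_eq_self.mpr (Finset.mem_singleton_self _),
        Finset.card_singleton]
      omega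
    · rw [if_neg h, card_pair (Ne.symm h)]
      omega
  -- per-(x,y) inner sum over z
  have hty : ∀ x y : Fin (k + 2),
      (∑ z : Fin (k + 2), if (y ≠ x ∧ z ≠ x ∧ z ≠ σ y) then (1 : ℕ) else 0)
      = if y = x then 0 else (if σ y = x then k + 1 else k) := by
    intro x y
    by_cases hy : y = x
    · simp [hy]
    · rw [if_neg hy]
      have : (∑ z : Fin (k + 2), if (y ≠ x ∧ z ≠ x ∧ z ≠ σ y) then (1 : ℕ) else 0)
          = (univ.filter fun z : Fin (k + 2) => z ≠ x ∧ z ≠ σ y).card := by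
        rw [card_filter]
        refine Finset.sum_congr rfl fun z _ => ?_
        by_cases h1 : z ≠ x ∧ z ≠ σ y <;> simp [h1, hy]
      rw [this, hz]
  -- per-x identity
  have key : ∀ x : Fin (k + 2),
      (∑ y : Fin (k + 2), ∑ z : Fin (k + 2),
          if (y ≠ x ∧ z ≠ x ∧ z ≠ σ y) then (1 : ℕ) else 0)
        + (if σ x = x then 1 else 0) = (k + 1) * k + 1 := by
    intro x
    have hrow : (∑ y : Fin (k + 2), ∑ z : Fin (k + 2),
        if (y ≠ x ∧ z ≠ x ∧ z ≠ σ y) then (1 : ℕ) else 0)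
        = ∑ y ∈ univ.erase x, (if σ y = x then k + 1 else k) := by
      rw [Finset.sum_congr rfl fun y _ => hty x y]
      rw [← Finset.sum_erase (univ : Finset (Fin (k + 2)))
        (f := fun y => if y = x then 0 else (if σ y = x then k + 1 else k)) (a := x)
        (if_pos rfl)]
      exact Finset.sum_congr rfl fun y hy => by
        rw [if_neg (Finset.ne_of_mem_erase hy)]
    have hs : (∑ y : Fin (k + 2), (if σ y = x then k + 1 else k)) = (k + 2) * k + 1 := by
      have h1 : ∀ y : Fin (k + 2), (if σ y = x then k + 1 else k)
          = k + (if σ y = x then 1 else 0) := by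
        intro y; by_cases h : σ y = x <;> simp [h]
      rw [Finset.sum_congr rfl fun y _ => h1 y, Finset.sum_add_distrib,
        Finset.sum_const, Finset.card_univ, Fintype.card_fin, smul_eq_mul]
      congr 1
      rw [Fintype.sum_equiv σ _ (fun z => if z = x then 1 else 0) (fun y => rfl)]
      simp
    have herase : (∑ y ∈ univ.erase x, (if σ y = x then k + 1 else k))
        + (if σ x = x then k + 1 else k)
        = ∑ y : Fin (k + 2), (if σ y = x then k + 1 else k) := by
      exact Finset.sum_erase_add _ _ (Finset.mem_univ x)
    rw [hrow, hs] at *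
    have hm2 : (k + 2) * k = (k + 1) * k + k := by ring
    by_cases hfix : σ x = x
    · rw [if_pos hfix] at herase
      rw [if_pos hfix]
      omega
    · rw [if_neg hfix] at herase
      rw [if_neg hfix]
      omega
  -- assemble
  have hcard : (Finset.univ.filter (fun p : Fin (k + 2) × Fin (k + 2) × Fin (k + 2) =>
      p.2.1 ≠ p.1 ∧ p.2.2 ≠ p.1 ∧ p.2.2 ≠ σ p.2.1)).card
      = ∑ x : Fin (k + 2), ∑ y : Fin (k + 2), ∑ z : Fin (k + 2),
          if (y ≠ x ∧ z ≠ x ∧ z ≠ σ y) then (1 : ℕ) else 0 := by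
    rw [card_filter, Fintype.sum_prod_type]
    exact Finset.sum_congr rfl fun x _ => by rw [Fintype.sum_prod_type]
  have hfixcard : (Finset.univ.filter fun x : Fin (k + 2) => σ x = x).card
      = ∑ x : Fin (k + 2), (if σ x = x then (1 : ℕ) else 0) := card_filter _ _
  rw [hcard, hfixcard, ← Finset.sum_add_distrib,
    Finset.sum_congr rfl fun x _ => key x, Finset.sum_const, Finset.card_univ,
    Fintype.card_fin, smul_eq_mul]
  ring

/-- For `m ≥ 2`, the maximum over all permutations `σ` of `{1,…,m}` of the number
of triples `(x,y,z)` with `y ≠ x`, `z ≠ x`, `z ≠ σ y` equals `(m-1)³ + 1`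
(this is `P*_{DP}(K₃, m)`). -/
theorem dual_DP_K3 (m : ℕ) (hm : 2 ≤ m) :
    (Finset.univ.sup (fun σ : Equiv.Perm (Fin m) =>
        (Finset.univ.filter (fun p : Fin m × Fin m × Fin m =>
          p.2.1 ≠ p.1 ∧ p.2.2 ≠ p.1 ∧ p.2.2 ≠ σ p.2.1)).card))
      = (m - 1) ^ 3 + 1 := by
  obtain ⟨k, rfl⟩ : ∃ k, m = k + 2 := ⟨m - 2, by omega⟩
  have hm1 : k + 2 - 1 = k + 1 := rfl
  rw [hm1]
  apply le_antisymm
  · apply Finset.sup_le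
    intro σ _
    have := count_plus_fix k σ
    omega
  · -- a derangement: `x ↦ 1 + x`
    haveI : NeZero (k + 2) := ⟨by omega⟩
    set σ0 : Equiv.Perm (Fin (k + 2)) := Equiv.addLeft 1 with hσ0
    have hone : (1 : Fin (k + 2)) ≠ 0 := by
      intro h
      have := congrArg Fin.val h
      simp [Fin.val_one] at this
    have hfix : (Finset.univ.filter fun x : Fin (k + 2) => σ0 x = x) = ∅ := by
      apply Finset.filter_false_of_mem
      intro x _ h
      apply hone
      have : (1 : Fin (k + 2)) + x = 0 + x := by
        simpa [hσ0, Equiv.coe_addLeft] using h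
      exact add_right_cancel this
    have := count_plus_fix k σ0
    rw [hfix, Finset.card_empty, add_zero] at this
    rw [← this]
    exact Finset.le_sup (f := fun σ : Equiv.Perm (Fin (k + 2)) =>
      (Finset.univ.filter (fun p : Fin (k + 2) × Fin (k + 2) × Fin (k + 2) =>
        p.2.1 ≠ p.1 ∧ p.2.2 ≠ p.1 ∧ p.2.2 ≠ σ p.2.1)).card) (Finset.mem_univ σ0)
end

section
/- Let m ≥ 4 and let σ_{ij}, for 1 ≤ i < j ≤ 4, be six permutations of {1,…,m}. Then the number of tuples (x₁,x₂,x₃,x₄) ∈ {1,…,m}⁴ satisfying x_j ≠ σ_{ij}(x_i) for all 1 ≤ i < j ≤ 4 is at most m⁴ − 6m³ + 15m² − 13m. -/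
section DPK4Aux

variable {m : ℕ}

private lemma sum_ind_ne2 (a b : Fin m) :
    ∑ x : Fin m, (if x ≠ a ∧ x ≠ b then (1:ℤ) else 0)
      = (m : ℤ) - ({a, b} : Finset (Fin m)).card := by
  rw [Finset.sum_boole]
  have h : Finset.univ.filter (fun x => x ≠ a ∧ x ≠ b)
      = Finset.univ \ ({a, b} : Finset (Fin m)) := by
    ext x; simp [not_or]
  have hle : ({a,b} : Finset (Fin m)).card ≤ m := by
    simpa using Finset.card_le_card (Finset.subset_univ ({a,b} : Finset (Fin m)))
  rw [h, Finset.card_sdiff_of_subset (Finset.subset_univ _), Finset.card_univ, Fintype.card_fin,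
    Nat.cast_sub hle]

private lemma sum_ind_ne3 (c d e : Fin m) :
    ∑ x : Fin m, (if x ≠ c ∧ x ≠ d ∧ x ≠ e then (1:ℤ) else 0)
      = (m : ℤ) - ({c, d, e} : Finset (Fin m)).card := by
  rw [Finset.sum_boole]
  have h : Finset.univ.filter (fun x => x ≠ c ∧ x ≠ d ∧ x ≠ e)
      = Finset.univ \ ({c, d, e} : Finset (Fin m)) := by
    ext x; simp [not_or]
  have hle : ({c,d,e} : Finset (Fin m)).card ≤ m := by
    simpa using Finset.card_le_card (Finset.subset_univ ({c,d,e} : Finset (Fin m)))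
  rw [h, Finset.card_sdiff_of_subset (Finset.subset_univ _), Finset.card_univ, Fintype.card_fin,
    Nat.cast_sub hle]

private lemma card3_le (c d e : Fin m) :
    (m:ℤ) - ({c,d,e} : Finset (Fin m)).card
      ≤ (m:ℤ) - ({c,d} : Finset (Fin m)).card - 1
        + (if e ∈ ({c,d} : Finset (Fin m)) then (1:ℤ) else 0) := by
  have h : ({c,d,e} : Finset (Fin m)) = insert e ({c,d} : Finset (Fin m)) := by
    ext x; simp; tauto
  rw [h]
  by_cases he : e ∈ ({c,d} : Finset (Fin m))
  · rw [Finset.insert_eq_self.2 he, if_pos he]; linarith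
  · rw [Finset.card_insert_of_notMem he, if_neg he]; push_cast; linarith

private lemma sum_ind_mem2 (σ : Equiv.Perm (Fin m)) (c d : Fin m) :
    ∑ x : Fin m, (if σ x ∈ ({c,d} : Finset (Fin m)) then (1:ℤ) else 0)
      = ({c,d} : Finset (Fin m)).card := by
  rw [Equiv.sum_comp σ (fun y => if y ∈ ({c,d} : Finset (Fin m)) then (1:ℤ) else 0),
    Finset.sum_boole]
  congr 1
  congr 1
  ext x; simp

private lemma pair_bound (a b c d : Fin m) (σ : Equiv.Perm (Fin m)) :
    (∑ x3 : Fin m, ∑ x4 : Fin m,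
      (if (x3 ≠ a ∧ x3 ≠ b) ∧ (x4 ≠ c ∧ x4 ≠ d ∧ x4 ≠ σ x3) then (1:ℤ) else 0))
      ≤ ((m:ℤ)^2 - 5*m + 8) + (if a = b then (m:ℤ) - 3 else 0)
        + (if c = d then (m:ℤ) - 3 else 0) + (if a = b ∧ c = d then (1:ℤ) else 0) := by
  set t : ℤ := (({c,d} : Finset (Fin m)).card : ℤ) with ht
  have step : ∀ x3 : Fin m,
      (∑ x4 : Fin m, (if (x3 ≠ a ∧ x3 ≠ b) ∧ (x4 ≠ c ∧ x4 ≠ d ∧ x4 ≠ σ x3) then (1:ℤ) else 0))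
      ≤ (if x3 ≠ a ∧ x3 ≠ b then (m:ℤ) - t - 1 else 0)
        + (if σ x3 ∈ ({c,d} : Finset (Fin m)) then (1:ℤ) else 0) := by
    intro x3
    by_cases hx3 : x3 ≠ a ∧ x3 ≠ b
    · have : (∑ x4 : Fin m,
          (if (x3 ≠ a ∧ x3 ≠ b) ∧ (x4 ≠ c ∧ x4 ≠ d ∧ x4 ≠ σ x3) then (1:ℤ) else 0))
          = ∑ x4 : Fin m, (if (x4 ≠ c ∧ x4 ≠ d ∧ x4 ≠ σ x3) then (1:ℤ) else 0) := by
        refine Finset.sum_congr rfl fun x4 _ => ?_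
        simp [hx3]
      rw [this, sum_ind_ne3, if_pos hx3]
      exact card3_le c d (σ x3)
    · have h0 : (∑ x4 : Fin m,
          (if (x3 ≠ a ∧ x3 ≠ b) ∧ (x4 ≠ c ∧ x4 ≠ d ∧ x4 ≠ σ x3) then (1:ℤ) else 0)) = 0 := by
        refine Finset.sum_eq_zero fun x4 _ => ?_
        simp [hx3]
      rw [h0, if_neg hx3]
      split_ifs <;> norm_num
  have h1 : (∑ x3 : Fin m, ∑ x4 : Fin m,
      (if (x3 ≠ a ∧ x3 ≠ b) ∧ (x4 ≠ c ∧ x4 ≠ d ∧ x4 ≠ σ x3) then (1:ℤ) else 0))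
      ≤ ((m:ℤ) - (({a,b} : Finset (Fin m)).card : ℤ)) * ((m:ℤ) - t - 1) + t := by
    calc _ ≤ ∑ x3 : Fin m, ((if x3 ≠ a ∧ x3 ≠ b then (m:ℤ) - t - 1 else 0)
          + (if σ x3 ∈ ({c,d} : Finset (Fin m)) then (1:ℤ) else 0)) :=
        Finset.sum_le_sum fun x3 _ => step x3
      _ = (∑ x3 : Fin m, (if x3 ≠ a ∧ x3 ≠ b then (m:ℤ) - t - 1 else 0))
          + ∑ x3 : Fin m, (if σ x3 ∈ ({c,d} : Finset (Fin m)) then (1:ℤ) else 0) :=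
        Finset.sum_add_distrib
      _ = ((m:ℤ) - (({a,b} : Finset (Fin m)).card : ℤ)) * ((m:ℤ) - t - 1) + t := by
        rw [sum_ind_mem2]
        congr 1
        have : ∀ x3 : Fin m, (if x3 ≠ a ∧ x3 ≠ b then (m:ℤ) - t - 1 else 0)
            = ((m:ℤ) - t - 1) * (if x3 ≠ a ∧ x3 ≠ b then (1:ℤ) else 0) := by
          intro x3; split_ifs <;> ring
        rw [Finset.sum_congr rfl fun x3 _ => this x3, ← Finset.mul_sum, sum_ind_ne2]
        ring
  refine h1.trans ?_
  have hab : (({a,b} : Finset (Fin m)).card : ℤ) = if a = b then 1 else 2 := by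
    split_ifs with h
    · subst h; simp
    · rw [Finset.card_pair h]; norm_num
  have hcd : t = if c = d then 1 else 2 := by
    rw [ht]
    split_ifs with h
    · subst h; simp
    · rw [Finset.card_pair h]; norm_num
  rw [hab, hcd]
  by_cases h1 : a = b <;> by_cases h2 : c = d <;>
    simp only [h1, h2, if_pos, if_neg, and_true, true_and, if_true] <;> ring_nf <;>
    simp [h1, h2] <;> ring_nf <;> linarith [sq_nonneg ((m:ℤ))]

private lemma sum_ite_perm_eq (k : Fin m) (τ : Equiv.Perm (Fin m)) (C : ℤ) :
    ∑ x : Fin m, (if k = τ x then C else 0) = C := by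
  have h : ∀ x : Fin m, (if k = τ x then C else 0) = (if x = τ.symm k then C else 0) :=
    fun x => if_congr (by rw [Equiv.eq_symm_apply]; exact eq_comm) rfl rfl
  rw [Finset.sum_congr rfl (fun x _ => h x), Finset.sum_ite_eq' Finset.univ _ (fun _ => C)]
  simp

private lemma sum_ite_ne_eq (a : Fin m) (C : ℤ) :
    ∑ x : Fin m, (if x ≠ a then C else 0) = ((m:ℤ) - 1) * C := by
  have h : ∀ x : Fin m, (if x ≠ a then C else 0) = C - (if x = a then C else 0) := by
    intro x; by_cases hx : x = a <;> simp [hx]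
  rw [Finset.sum_congr rfl (fun x _ => h x), Finset.sum_sub_distrib,
    Finset.sum_ite_eq' Finset.univ _ (fun _ => C), Finset.sum_const, Finset.card_univ,
    Fintype.card_fin]
  simp only [Finset.mem_univ, if_pos]
  ring

end DPK4Aux

/-- For `m ≥ 4` and any six permutations `σᵢⱼ` (`1 ≤ i < j ≤ 4`) of `{1,…,m}`,
the number of `(x₁,x₂,x₃,x₄) ∈ {1,…,m}⁴` with `xⱼ ≠ σᵢⱼ xᵢ` for all `i < j`
is at most `m⁴ - 6m³ + 15m² - 13m`. -/
theorem dual_DP_K4_upper_bound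
    (m : ℕ) (hm : 4 ≤ m) (σ12 σ13 σ14 σ23 σ24 σ34 : Equiv.Perm (Fin m)) :
    ((Finset.univ.filter (fun p : Fin m × Fin m × Fin m × Fin m =>
        p.2.1 ≠ σ12 p.1 ∧ p.2.2.1 ≠ σ13 p.1 ∧ p.2.2.2 ≠ σ14 p.1 ∧
        p.2.2.1 ≠ σ23 p.2.1 ∧ p.2.2.2 ≠ σ24 p.2.1 ∧ p.2.2.2 ≠ σ34 p.2.2.1)).card : ℤ)
      ≤ (m : ℤ) ^ 4 - 6 * (m : ℤ) ^ 3 + 15 * (m : ℤ) ^ 2 - 13 * m := by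
  have hm' : (4:ℤ) ≤ (m:ℤ) := by exact_mod_cast hm
  have hcard : ((Finset.univ.filter (fun p : Fin m × Fin m × Fin m × Fin m =>
        p.2.1 ≠ σ12 p.1 ∧ p.2.2.1 ≠ σ13 p.1 ∧ p.2.2.2 ≠ σ14 p.1 ∧
        p.2.2.1 ≠ σ23 p.2.1 ∧ p.2.2.2 ≠ σ24 p.2.1 ∧ p.2.2.2 ≠ σ34 p.2.2.1)).card : ℤ)
      = ∑ x1 : Fin m, ∑ x2 : Fin m, ∑ x3 : Fin m, ∑ x4 : Fin m,
          (if x2 ≠ σ12 x1 ∧ ((x3 ≠ σ13 x1 ∧ x3 ≠ σ23 x2) ∧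
            (x4 ≠ σ14 x1 ∧ x4 ≠ σ24 x2 ∧ x4 ≠ σ34 x3)) then (1:ℤ) else 0) := by
    rw [← Finset.sum_boole]
    simp only [Fintype.sum_prod_type]
    refine Finset.sum_congr rfl fun x1 _ => Finset.sum_congr rfl fun x2 _ =>
      Finset.sum_congr rfl fun x3 _ => Finset.sum_congr rfl fun x4 _ => ?_
    exact if_congr (by tauto) rfl rfl
  rw [hcard]
  have hpair : ∀ x1 x2 : Fin m,
      (∑ x3 : Fin m, ∑ x4 : Fin m,
          (if x2 ≠ σ12 x1 ∧ ((x3 ≠ σ13 x1 ∧ x3 ≠ σ23 x2) ∧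
            (x4 ≠ σ14 x1 ∧ x4 ≠ σ24 x2 ∧ x4 ≠ σ34 x3)) then (1:ℤ) else 0))
      ≤ (if x2 ≠ σ12 x1 then (m:ℤ)^2 - 5*m + 8 else 0)
        + (if σ13 x1 = σ23 x2 then (m:ℤ) - 3 else 0)
        + (if σ14 x1 = σ24 x2 then (m:ℤ) - 3 else 0)
        + (if σ13 x1 = σ23 x2 ∧ σ14 x1 = σ24 x2 then (1:ℤ) else 0) := by
    intro x1 x2
    by_cases h12 : x2 ≠ σ12 x1
    · have he : (∑ x3 : Fin m, ∑ x4 : Fin m,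
          (if x2 ≠ σ12 x1 ∧ ((x3 ≠ σ13 x1 ∧ x3 ≠ σ23 x2) ∧
            (x4 ≠ σ14 x1 ∧ x4 ≠ σ24 x2 ∧ x4 ≠ σ34 x3)) then (1:ℤ) else 0))
          = ∑ x3 : Fin m, ∑ x4 : Fin m,
          (if (x3 ≠ σ13 x1 ∧ x3 ≠ σ23 x2) ∧
            (x4 ≠ σ14 x1 ∧ x4 ≠ σ24 x2 ∧ x4 ≠ σ34 x3) then (1:ℤ) else 0) := by
        refine Finset.sum_congr rfl fun x3 _ => Finset.sum_congr rfl fun x4 _ => ?_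
        exact if_congr (by tauto) rfl rfl
      rw [he, if_pos h12]
      exact pair_bound (σ13 x1) (σ23 x2) (σ14 x1) (σ24 x2) σ34
    · have h0 : (∑ x3 : Fin m, ∑ x4 : Fin m,
          (if x2 ≠ σ12 x1 ∧ ((x3 ≠ σ13 x1 ∧ x3 ≠ σ23 x2) ∧
            (x4 ≠ σ14 x1 ∧ x4 ≠ σ24 x2 ∧ x4 ≠ σ34 x3)) then (1:ℤ) else 0)) = 0 := by
        refine Finset.sum_eq_zero fun x3 _ => Finset.sum_eq_zero fun x4 _ => ?_
        simp [h12]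
      rw [h0, if_neg h12]
      have h3 : (0:ℤ) ≤ (m:ℤ) - 3 := by linarith
      split_ifs <;> linarith
  have hx2 : ∀ x1 : Fin m,
      (∑ x2 : Fin m, ∑ x3 : Fin m, ∑ x4 : Fin m,
          (if x2 ≠ σ12 x1 ∧ ((x3 ≠ σ13 x1 ∧ x3 ≠ σ23 x2) ∧
            (x4 ≠ σ14 x1 ∧ x4 ≠ σ24 x2 ∧ x4 ≠ σ34 x3)) then (1:ℤ) else 0))
      ≤ ((m:ℤ) - 1) * ((m:ℤ)^2 - 5*m + 8) + ((m:ℤ) - 3) + ((m:ℤ) - 3) + 1 := by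
    intro x1
    calc (∑ x2 : Fin m, ∑ x3 : Fin m, ∑ x4 : Fin m,
          (if x2 ≠ σ12 x1 ∧ ((x3 ≠ σ13 x1 ∧ x3 ≠ σ23 x2) ∧
            (x4 ≠ σ14 x1 ∧ x4 ≠ σ24 x2 ∧ x4 ≠ σ34 x3)) then (1:ℤ) else 0))
        ≤ ∑ x2 : Fin m, ((if x2 ≠ σ12 x1 then (m:ℤ)^2 - 5*m + 8 else 0)
            + (if σ13 x1 = σ23 x2 then (m:ℤ) - 3 else 0)
            + (if σ14 x1 = σ24 x2 then (m:ℤ) - 3 else 0)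
            + (if σ13 x1 = σ23 x2 ∧ σ14 x1 = σ24 x2 then (1:ℤ) else 0)) :=
          Finset.sum_le_sum fun x2 _ => hpair x1 x2
      _ ≤ ((m:ℤ) - 1) * ((m:ℤ)^2 - 5*m + 8) + ((m:ℤ) - 3) + ((m:ℤ) - 3) + 1 := by
          rw [Finset.sum_add_distrib, Finset.sum_add_distrib, Finset.sum_add_distrib,
            sum_ite_ne_eq, sum_ite_perm_eq, sum_ite_perm_eq]
          have hlast : (∑ x2 : Fin m,
              (if σ13 x1 = σ23 x2 ∧ σ14 x1 = σ24 x2 then (1:ℤ) else 0))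
              ≤ ∑ x2 : Fin m, (if σ13 x1 = σ23 x2 then (1:ℤ) else 0) := by
            refine Finset.sum_le_sum fun x2 _ => ?_
            by_cases h : σ13 x1 = σ23 x2 ∧ σ14 x1 = σ24 x2
            · rw [if_pos h, if_pos h.1]
            · rw [if_neg h]; split_ifs <;> norm_num
          rw [sum_ite_perm_eq] at hlast
          linarith
  calc (∑ x1 : Fin m, ∑ x2 : Fin m, ∑ x3 : Fin m, ∑ x4 : Fin m,
          (if x2 ≠ σ12 x1 ∧ ((x3 ≠ σ13 x1 ∧ x3 ≠ σ23 x2) ∧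
            (x4 ≠ σ14 x1 ∧ x4 ≠ σ24 x2 ∧ x4 ≠ σ34 x3)) then (1:ℤ) else 0))
      ≤ ∑ _x1 : Fin m, (((m:ℤ) - 1) * ((m:ℤ)^2 - 5*m + 8) + ((m:ℤ) - 3) + ((m:ℤ) - 3) + 1) :=
        Finset.sum_le_sum fun x1 _ => hx2 x1
    _ = (m : ℤ) ^ 4 - 6 * (m : ℤ) ^ 3 + 15 * (m : ℤ) ^ 2 - 13 * m := by
        rw [Finset.sum_const, Finset.card_univ, Fintype.card_fin]
        ring
end

section
/- Let m ≥ 6 be even and let s be the permutation of {1,…,m} with s(x) = x+1 for odd x and s(x) = x−1 for even x. Then the number of tuples (x₁,x₂,x₃,x₄) ∈ {1,…,m}⁴ satisfying x_j ≠ s(x_i) for all 1 ≤ i < j ≤ 4 equals m⁴ − 6m³ + 15m² − 13m. -/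
/-- The fixed-point-free involution `s` of `{1,…,m}` (for even `m`) with
`s(x) = x+1` for odd `x` and `s(x) = x-1` for even `x`. -/
def swapPerm (x : ℕ) : ℕ := if x % 2 = 1 then x + 1 else x - 1

/-- Indicator of equality, valued in ℤ. -/
def dd (a b : ℕ) : ℤ := if a = b then 1 else 0

lemma dd_self (a : ℕ) : dd a a = 1 := by simp [dd]

lemma dd_comm (a b : ℕ) : dd a b = dd b a := by simp [dd, eq_comm]

lemma dd_of_ne {a b : ℕ} (h : a ≠ b) : dd a b = 0 := by simp [dd, h]

lemma dd_mul_left (x u v : ℕ) : dd x u * dd x v = dd u v * dd x u := by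
  rcases eq_or_ne x u with rfl | h1
  · rcases eq_or_ne x v with rfl | h2
    · simp [dd]
    · simp [dd, h2]
  · simp [dd, h1]

lemma dd_idem (a b : ℕ) : dd a b * dd a b = dd a b := by
  rcases eq_or_ne a b with rfl | h
  · simp [dd]
  · simp [dd, h]

lemma swap_mem {m x : ℕ} (heven : Even m) (hx : x ∈ Finset.Icc 1 m) :
    swapPerm x ∈ Finset.Icc 1 m := by
  obtain ⟨k, rfl⟩ := heven
  simp only [Finset.mem_Icc] at hx ⊢
  unfold swapPerm; split_ifs with h <;> omega

lemma swap_ne {x : ℕ} (hx : 1 ≤ x) : swapPerm x ≠ x := by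
  unfold swapPerm; split_ifs with h <;> omega

lemma swap_inj {a b : ℕ} (ha : 1 ≤ a) (hb : 1 ≤ b) : swapPerm a = swapPerm b ↔ a = b := by
  unfold swapPerm; split_ifs with h1 h2 h2 <;> omega

lemma swap_eq_comm {a b : ℕ} (ha : 1 ≤ a) (hb : 1 ≤ b) : swapPerm a = b ↔ a = swapPerm b := by
  unfold swapPerm; split_ifs with h1 h2 h2 <;> omega

lemma dd_ss {a b : ℕ} (ha : 1 ≤ a) (hb : 1 ≤ b) : dd (swapPerm a) (swapPerm b) = dd a b := by
  simp [dd, swap_inj ha hb]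

lemma dd_s_self {a : ℕ} (ha : 1 ≤ a) : dd (swapPerm a) a = 0 := dd_of_ne (swap_ne ha)

lemma dd_s_self' {a : ℕ} (ha : 1 ≤ a) : dd a (swapPerm a) = 0 := by
  rw [dd_comm]; exact dd_s_self ha

lemma dd_a_sb {a b : ℕ} (ha : 1 ≤ a) (hb : 1 ≤ b) : dd a (swapPerm b) = dd (swapPerm a) b := by
  simp only [dd]
  by_cases h : a = swapPerm b
  · rw [if_pos h, if_pos ((swap_eq_comm ha hb).mpr h)]
  · rw [if_neg h, if_neg (by rw [swap_eq_comm ha hb]; exact h)]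

lemma dd_mul_s {a b : ℕ} (ha : 1 ≤ a) (hb : 1 ≤ b) : dd a b * dd (swapPerm a) b = 0 := by
  rcases eq_or_ne a b with rfl | h
  · rw [dd_s_self ha]; ring
  · rw [dd_of_ne h]; ring
open Finset in
lemma sum_one (m : ℕ) : ∑ _x ∈ Finset.Icc 1 m, (1 : ℤ) = m := by
  simp [Nat.card_Icc]

open Finset in
lemma sum_dd_one {m u : ℕ} (hu : u ∈ Finset.Icc 1 m) :
    ∑ x ∈ Finset.Icc 1 m, dd x u = 1 := by
  simp only [dd]
  rw [Finset.sum_ite_eq' (Finset.Icc 1 m) u (fun _ => (1:ℤ))]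
  simp [hu]

open Finset in
lemma sum_dd_two {m u v : ℕ} (hu : u ∈ Finset.Icc 1 m) (hv : v ∈ Finset.Icc 1 m) :
    ∑ x ∈ Finset.Icc 1 m, dd x u * dd x v = dd u v := by
  calc ∑ x ∈ Finset.Icc 1 m, dd x u * dd x v
      = ∑ x ∈ Finset.Icc 1 m, dd u v * dd x u :=
        Finset.sum_congr rfl fun x _ => dd_mul_left x u v
    _ = dd u v * ∑ x ∈ Finset.Icc 1 m, dd x u := by rw [Finset.mul_sum]
    _ = dd u v := by rw [sum_dd_one hu, mul_one]

open Finset in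
lemma sum_dd_three {m u v w : ℕ} (hu : u ∈ Finset.Icc 1 m) (hv : v ∈ Finset.Icc 1 m)
    (hw : w ∈ Finset.Icc 1 m) :
    ∑ x ∈ Finset.Icc 1 m, dd x u * dd x v * dd x w = dd u v * dd u w := by
  calc ∑ x ∈ Finset.Icc 1 m, dd x u * dd x v * dd x w
      = ∑ x ∈ Finset.Icc 1 m, dd u v * (dd x u * dd x w) :=
        Finset.sum_congr rfl fun x _ => by rw [dd_mul_left x u v]; ring
    _ = dd u v * ∑ x ∈ Finset.Icc 1 m, dd x u * dd x w := by rw [Finset.mul_sum]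
    _ = dd u v * dd u w := by rw [sum_dd_two hu hw]
lemma sum_const_int (m : ℕ) (c : ℤ) : ∑ _x ∈ Finset.Icc 1 m, c = (m : ℤ) * c := by
  rw [Finset.sum_const, Nat.card_Icc]
  push_cast [nsmul_eq_mul]
  ring

lemma G4 {m a b c : ℕ} (heven : Even m) (ha : a ∈ Finset.Icc 1 m) (hb : b ∈ Finset.Icc 1 m)
    (hc : c ∈ Finset.Icc 1 m) :
    ∑ x ∈ Finset.Icc 1 m,
      (1 - dd x (swapPerm a)) * (1 - dd x (swapPerm b)) * (1 - dd x (swapPerm c))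
    = (m : ℤ) - 3 + dd a b + dd a c + dd b c - dd a b * dd a c := by
  have ha1 : 1 ≤ a := (Finset.mem_Icc.mp ha).1
  have hb1 : 1 ≤ b := (Finset.mem_Icc.mp hb).1
  have hc1 : 1 ≤ c := (Finset.mem_Icc.mp hc).1
  have hsa := swap_mem heven ha
  have hsb := swap_mem heven hb
  have hsc := swap_mem heven hc
  calc ∑ x ∈ Finset.Icc 1 m,
        (1 - dd x (swapPerm a)) * (1 - dd x (swapPerm b)) * (1 - dd x (swapPerm c))
      = ∑ x ∈ Finset.Icc 1 m,
        ((1 : ℤ) + dd x (swapPerm a) * dd x (swapPerm b) + dd x (swapPerm a) * dd x (swapPerm c)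
          + dd x (swapPerm b) * dd x (swapPerm c)
          - dd x (swapPerm a) - dd x (swapPerm b) - dd x (swapPerm c)
          - dd x (swapPerm a) * dd x (swapPerm b) * dd x (swapPerm c)) :=
        Finset.sum_congr rfl fun x _ => by ring
    _ = (m : ℤ) - 3 + dd a b + dd a c + dd b c - dd a b * dd a c := by
        simp only [Finset.sum_sub_distrib, Finset.sum_add_distrib]
        rw [sum_one, sum_dd_one hsa, sum_dd_one hsb, sum_dd_one hsc,
          sum_dd_two hsa hsb, sum_dd_two hsa hsc, sum_dd_two hsb hsc,
          sum_dd_three hsa hsb hsc,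
          dd_ss ha1 hb1, dd_ss ha1 hc1, dd_ss hb1 hc1]
        ring

lemma G3 {m a b : ℕ} (heven : Even m) (ha : a ∈ Finset.Icc 1 m) (hb : b ∈ Finset.Icc 1 m) :
    ∑ x ∈ Finset.Icc 1 m,
      (1 - dd x (swapPerm a)) * (1 - dd x (swapPerm b)) *
        ((m : ℤ) - 3 + dd a b + dd a x + dd b x - dd a b * dd a x)
    = ((m : ℤ) - 3) * ((m : ℤ) - 2) + 2 + (2 * (m : ℤ) - 5) * dd a b
        - 2 * dd (swapPerm a) b := by
  have ha1 : 1 ≤ a := (Finset.mem_Icc.mp ha).1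
  have hb1 : 1 ≤ b := (Finset.mem_Icc.mp hb).1
  have hsa := swap_mem heven ha
  have hsb := swap_mem heven hb
  calc ∑ x ∈ Finset.Icc 1 m,
        (1 - dd x (swapPerm a)) * (1 - dd x (swapPerm b)) *
          ((m : ℤ) - 3 + dd a b + dd a x + dd b x - dd a b * dd a x)
      = ∑ x ∈ Finset.Icc 1 m,
        (((m : ℤ) - 3 + dd a b) + (1 - dd a b) * dd x a + dd x b
          + ((m : ℤ) - 3 + dd a b) * (dd x (swapPerm a) * dd x (swapPerm b))
          + (dd a b - 1) * (dd x (swapPerm a) * dd x a)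
          + (dd a b - 1) * (dd x (swapPerm b) * dd x a)
          + (1 - dd a b) * (dd x (swapPerm a) * dd x (swapPerm b) * dd x a)
          + dd x (swapPerm a) * dd x (swapPerm b) * dd x b
          - ((m : ℤ) - 3 + dd a b) * dd x (swapPerm a)
          - ((m : ℤ) - 3 + dd a b) * dd x (swapPerm b)
          - dd x (swapPerm a) * dd x b
          - dd x (swapPerm b) * dd x b) :=
        Finset.sum_congr rfl fun x _ => by rw [dd_comm a x, dd_comm b x]; ring
    _ = _ := by
        simp only [Finset.sum_sub_distrib, Finset.sum_add_distrib, ← Finset.mul_sum]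
        simp only [Finset.sum_const, Nat.card_Icc, Nat.add_sub_cancel, nsmul_eq_mul]
        rw [sum_dd_one ha, sum_dd_one hb, sum_dd_one hsa, sum_dd_one hsb,
          sum_dd_two hsa hsb, sum_dd_two hsa ha, sum_dd_two hsb ha, sum_dd_two hsa hb,
          sum_dd_two hsb hb, sum_dd_three hsa hsb ha, sum_dd_three hsa hsb hb,
          dd_ss ha1 hb1, dd_s_self ha1, dd_s_self hb1]
        rw [dd_comm (swapPerm b) a, dd_a_sb ha1 hb1]
        linear_combination dd_idem a b + 2 * dd_mul_s ha1 hb1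
lemma G2 {m a : ℕ} (heven : Even m) (ha : a ∈ Finset.Icc 1 m) :
    ∑ x ∈ Finset.Icc 1 m,
      (1 - dd x (swapPerm a)) *
        (((m : ℤ) - 3) * ((m : ℤ) - 2) + 2 + (2 * (m : ℤ) - 5) * dd a x
          - 2 * dd (swapPerm a) x)
    = (((m : ℤ) - 3) * ((m : ℤ) - 2) + 2) * ((m : ℤ) - 1) + 2 * (m : ℤ) - 5 := by
  have ha1 : 1 ≤ a := (Finset.mem_Icc.mp ha).1
  have hsa := swap_mem heven ha
  calc ∑ x ∈ Finset.Icc 1 m,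
        (1 - dd x (swapPerm a)) *
          (((m : ℤ) - 3) * ((m : ℤ) - 2) + 2 + (2 * (m : ℤ) - 5) * dd a x
            - 2 * dd (swapPerm a) x)
      = ∑ x ∈ Finset.Icc 1 m,
        ((((m : ℤ) - 3) * ((m : ℤ) - 2) + 2) + (2 * (m : ℤ) - 5) * dd x a
          + 2 * (dd x (swapPerm a) * dd x (swapPerm a))
          - (((m : ℤ) - 3) * ((m : ℤ) - 2) + 2) * dd x (swapPerm a)
          - (2 * (m : ℤ) - 5) * (dd x (swapPerm a) * dd x a)
          - 2 * dd x (swapPerm a)) :=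
        Finset.sum_congr rfl fun x _ => by rw [dd_comm a x, dd_comm (swapPerm a) x]; ring
    _ = _ := by
        simp only [Finset.sum_sub_distrib, Finset.sum_add_distrib, ← Finset.mul_sum]
        simp only [Finset.sum_const, Nat.card_Icc, Nat.add_sub_cancel, nsmul_eq_mul]
        rw [sum_dd_one ha, sum_dd_one hsa, sum_dd_two hsa hsa, sum_dd_two hsa ha,
          dd_self, dd_s_self ha1]
        ring
lemma ite_ne_int (u v : ℕ) : (if u ≠ v then (1:ℤ) else 0) = 1 - dd u v := by
  rcases eq_or_ne u v with rfl | h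
  · simp [dd]
  · simp [dd, h]

lemma ite_and_six (P1 P2 P3 P4 P5 P6 : Prop) [Decidable P1] [Decidable P2] [Decidable P3]
    [Decidable P4] [Decidable P5] [Decidable P6] :
    (if P1 ∧ P2 ∧ P3 ∧ P4 ∧ P5 ∧ P6 then (1:ℤ) else 0)
      = (if P1 then (1:ℤ) else 0) * (if P2 then (1:ℤ) else 0) * (if P3 then (1:ℤ) else 0)
        * (if P4 then (1:ℤ) else 0) * (if P5 then (1:ℤ) else 0) * (if P6 then (1:ℤ) else 0) := by
  by_cases h1 : P1 <;> by_cases h2 : P2 <;> by_cases h3 : P3 <;> by_cases h4 : P4 <;>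
    by_cases h5 : P5 <;> by_cases h6 : P6 <;> simp [h1, h2, h3, h4, h5, h6]

/-- For even `m ≥ 6`, the number of `(x₁,x₂,x₃,x₄) ∈ {1,…,m}⁴` with
`xⱼ ≠ s(xᵢ)` for all `1 ≤ i < j ≤ 4` equals `m⁴ - 6m³ + 15m² - 13m`. -/
theorem dual_DP_K4_even_extremal (m : ℕ) (hm : 6 ≤ m) (heven : Even m) :
    ((((Finset.Icc 1 m) ×ˢ (Finset.Icc 1 m) ×ˢ (Finset.Icc 1 m) ×ˢ (Finset.Icc 1 m)).filter
        (fun p : ℕ × ℕ × ℕ × ℕ =>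
          p.2.1 ≠ swapPerm p.1 ∧ p.2.2.1 ≠ swapPerm p.1 ∧ p.2.2.2 ≠ swapPerm p.1 ∧
          p.2.2.1 ≠ swapPerm p.2.1 ∧ p.2.2.2 ≠ swapPerm p.2.1 ∧
          p.2.2.2 ≠ swapPerm p.2.2.1)).card : ℤ)
      = (m : ℤ) ^ 4 - 6 * (m : ℤ) ^ 3 + 15 * (m : ℤ) ^ 2 - 13 * m := by
  classical
  rw [Finset.card_filter]
  push_cast
  rw [Finset.sum_product]
  calc ∑ x1 ∈ Finset.Icc 1 m, ∑ p ∈ (Finset.Icc 1 m) ×ˢ (Finset.Icc 1 m) ×ˢ (Finset.Icc 1 m),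
        (if p.1 ≠ swapPerm x1 ∧ p.2.1 ≠ swapPerm x1 ∧ p.2.2 ≠ swapPerm x1 ∧
            p.2.1 ≠ swapPerm p.1 ∧ p.2.2 ≠ swapPerm p.1 ∧ p.2.2 ≠ swapPerm p.2.1
          then (1:ℤ) else 0)
      = ∑ _x1 ∈ Finset.Icc 1 m,
          ((((m : ℤ) - 3) * ((m : ℤ) - 2) + 2) * ((m : ℤ) - 1) + 2 * (m : ℤ) - 5) := by
        refine Finset.sum_congr rfl fun x1 h1 => ?_
        rw [Finset.sum_product]
        calc ∑ x2 ∈ Finset.Icc 1 m, ∑ p ∈ (Finset.Icc 1 m) ×ˢ (Finset.Icc 1 m),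
              (if x2 ≠ swapPerm x1 ∧ p.1 ≠ swapPerm x1 ∧ p.2 ≠ swapPerm x1 ∧
                  p.1 ≠ swapPerm x2 ∧ p.2 ≠ swapPerm x2 ∧ p.2 ≠ swapPerm p.1
                then (1:ℤ) else 0)
            = ∑ x2 ∈ Finset.Icc 1 m,
                (1 - dd x2 (swapPerm x1)) *
                  (((m : ℤ) - 3) * ((m : ℤ) - 2) + 2 + (2 * (m : ℤ) - 5) * dd x1 x2
                    - 2 * dd (swapPerm x1) x2) := by
              refine Finset.sum_congr rfl fun x2 h2 => ?_
              rw [Finset.sum_product]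
              calc ∑ x3 ∈ Finset.Icc 1 m, ∑ x4 ∈ Finset.Icc 1 m,
                    (if x2 ≠ swapPerm x1 ∧ x3 ≠ swapPerm x1 ∧ x4 ≠ swapPerm x1 ∧
                        x3 ≠ swapPerm x2 ∧ x4 ≠ swapPerm x2 ∧ x4 ≠ swapPerm x3
                      then (1:ℤ) else 0)
                  = ∑ x3 ∈ Finset.Icc 1 m,
                      (1 - dd x2 (swapPerm x1)) *
                        ((1 - dd x3 (swapPerm x1)) * (1 - dd x3 (swapPerm x2)) *
                          ((m : ℤ) - 3 + dd x1 x2 + dd x1 x3 + dd x2 x3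
                            - dd x1 x2 * dd x1 x3)) := by
                    refine Finset.sum_congr rfl fun x3 h3 => ?_
                    calc ∑ x4 ∈ Finset.Icc 1 m,
                          (if x2 ≠ swapPerm x1 ∧ x3 ≠ swapPerm x1 ∧ x4 ≠ swapPerm x1 ∧
                              x3 ≠ swapPerm x2 ∧ x4 ≠ swapPerm x2 ∧ x4 ≠ swapPerm x3
                            then (1:ℤ) else 0)
                        = ∑ x4 ∈ Finset.Icc 1 m,
                            ((1 - dd x2 (swapPerm x1)) * ((1 - dd x3 (swapPerm x1)) *
                              (1 - dd x3 (swapPerm x2)))) *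
                              ((1 - dd x4 (swapPerm x1)) * (1 - dd x4 (swapPerm x2)) *
                                (1 - dd x4 (swapPerm x3))) := by
                          refine Finset.sum_congr rfl fun x4 _ => ?_
                          rw [ite_and_six, ite_ne_int, ite_ne_int, ite_ne_int, ite_ne_int,
                            ite_ne_int, ite_ne_int]
                          ring
                      _ = ((1 - dd x2 (swapPerm x1)) * ((1 - dd x3 (swapPerm x1)) *
                              (1 - dd x3 (swapPerm x2)))) *
                            ((m : ℤ) - 3 + dd x1 x2 + dd x1 x3 + dd x2 x3
                              - dd x1 x2 * dd x1 x3) := by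
                          rw [← Finset.mul_sum, G4 heven h1 h2 h3]
                      _ = (1 - dd x2 (swapPerm x1)) *
                            ((1 - dd x3 (swapPerm x1)) * (1 - dd x3 (swapPerm x2)) *
                              ((m : ℤ) - 3 + dd x1 x2 + dd x1 x3 + dd x2 x3
                                - dd x1 x2 * dd x1 x3)) := by ring
                _ = (1 - dd x2 (swapPerm x1)) *
                      (∑ x3 ∈ Finset.Icc 1 m,
                        (1 - dd x3 (swapPerm x1)) * (1 - dd x3 (swapPerm x2)) *
                          ((m : ℤ) - 3 + dd x1 x2 + dd x1 x3 + dd x2 x3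
                            - dd x1 x2 * dd x1 x3)) := by
                    rw [← Finset.mul_sum]
                _ = (1 - dd x2 (swapPerm x1)) *
                      (((m : ℤ) - 3) * ((m : ℤ) - 2) + 2 + (2 * (m : ℤ) - 5) * dd x1 x2
                        - 2 * dd (swapPerm x1) x2) := by
                    rw [G3 heven h1 h2]
          _ = (((m : ℤ) - 3) * ((m : ℤ) - 2) + 2) * ((m : ℤ) - 1) + 2 * (m : ℤ) - 5 := by
              have := G2 heven h1
              calc ∑ x2 ∈ Finset.Icc 1 m,
                    (1 - dd x2 (swapPerm x1)) *
                      (((m : ℤ) - 3) * ((m : ℤ) - 2) + 2 + (2 * (m : ℤ) - 5) * dd x1 x2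
                        - 2 * dd (swapPerm x1) x2)
                  = ∑ x2 ∈ Finset.Icc 1 m,
                    (1 - dd x2 (swapPerm x1)) *
                      (((m : ℤ) - 3) * ((m : ℤ) - 2) + 2 + (2 * (m : ℤ) - 5) * dd x1 x2
                        - 2 * dd (swapPerm x1) x2) := rfl
                _ = (((m : ℤ) - 3) * ((m : ℤ) - 2) + 2) * ((m : ℤ) - 1) + 2 * (m : ℤ) - 5 :=
                    G2 heven h1
    _ = (m : ℤ) ^ 4 - 6 * (m : ℤ) ^ 3 + 15 * (m : ℤ) ^ 2 - 13 * m := by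
        rw [sum_const_int]
        ring
end

section
/- Let m ≥ 7 be odd and let f be the permutation of {1,…,m} with f(1)=2, f(2)=3, f(3)=1, f(x)=x+1 for even x with 4 ≤ x ≤ m−1, and f(x)=x−1 for odd x with 5 ≤ x ≤ m. Then the number of tuples (x₁,x₂,x₃,x₄) ∈ {1,…,m}⁴ satisfying x₂ ≠ x₁, x₃ ≠ x₁, x₄ ≠ x₁, x₃ ≠ f(x₂), x₄ ≠ f(x₂), and x₄ ≠ f⁻¹(x₃) equals m⁴ − 6m³ + 15m² − 13m − 3. -/
/-- The permutation `f` of `{1,…,m}` (for odd `m`): `f(1)=2`, `f(2)=3`, `f(3)=1`,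
`f(x)=x+1` for even `x` with `4 ≤ x ≤ m-1`, `f(x)=x-1` for odd `x` with `5 ≤ x ≤ m`. -/
def oddPerm (x : ℕ) : ℕ :=
  if x = 1 then 2
  else if x = 2 then 3
  else if x = 3 then 1
  else if x % 2 = 0 then x + 1
  else x - 1

/-- The inverse of `oddPerm` on `{1,…,m}`: `f⁻¹(1)=3`, `f⁻¹(2)=1`, `f⁻¹(3)=2`,
and `f⁻¹` agrees with `f` on `{4,…,m}` (where `f` is an involution). -/
def oddPermInv (x : ℕ) : ℕ :=
  if x = 1 then 3
  else if x = 2 then 1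
  else if x = 3 then 2
  else if x % 2 = 0 then x + 1
  else x - 1

section helpers
variable {m : ℕ}

lemma oddPerm_mem (hm : 7 ≤ m) (hm2 : m % 2 = 1) {x : ℕ} (hx : x ∈ Finset.Icc 1 m) :
    oddPerm x ∈ Finset.Icc 1 m := by
  simp only [Finset.mem_Icc] at *
  unfold oddPerm
  split_ifs <;> omega

lemma oddPermInv_mem (hm : 7 ≤ m) (hm2 : m % 2 = 1) {x : ℕ} (hx : x ∈ Finset.Icc 1 m) :
    oddPermInv x ∈ Finset.Icc 1 m := by
  simp only [Finset.mem_Icc] at *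
  unfold oddPermInv
  split_ifs <;> omega

lemma oddPerm_ne {x : ℕ} (hx : x ∈ Finset.Icc 1 m) : oddPerm x ≠ x := by
  simp only [Finset.mem_Icc] at hx
  unfold oddPerm
  split_ifs <;> omega

lemma oddPermInv_ne {x : ℕ} (hx : x ∈ Finset.Icc 1 m) : oddPermInv x ≠ x := by
  simp only [Finset.mem_Icc] at hx
  unfold oddPermInv
  split_ifs <;> omega

lemma inv_left {x : ℕ} (hx : x ∈ Finset.Icc 1 m) : oddPermInv (oddPerm x) = x := by
  simp only [Finset.mem_Icc] at hx
  rcases eq_or_ne x 1 with rfl | h1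
  · decide
  rcases eq_or_ne x 2 with rfl | h2
  · decide
  rcases eq_or_ne x 3 with rfl | h3
  · decide
  by_cases he : x % 2 = 0
  · have e1 : oddPerm x = x + 1 := by unfold oddPerm; split_ifs <;> omega
    rw [e1]; unfold oddPermInv; split_ifs <;> omega
  · have e1 : oddPerm x = x - 1 := by unfold oddPerm; split_ifs <;> omega
    rw [e1]; unfold oddPermInv; split_ifs <;> omega

lemma inv_right {x : ℕ} (hx : x ∈ Finset.Icc 1 m) : oddPerm (oddPermInv x) = x := by
  simp only [Finset.mem_Icc] at hx
  rcases eq_or_ne x 1 with rfl | h1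
  · decide
  rcases eq_or_ne x 2 with rfl | h2
  · decide
  rcases eq_or_ne x 3 with rfl | h3
  · decide
  by_cases he : x % 2 = 0
  · have e1 : oddPermInv x = x + 1 := by unfold oddPermInv; split_ifs <;> omega
    rw [e1]; unfold oddPerm; split_ifs <;> omega
  · have e1 : oddPermInv x = x - 1 := by unfold oddPermInv; split_ifs <;> omega
    rw [e1]; unfold oddPerm; split_ifs <;> omega

lemma gg_filter (hm : 7 ≤ m) :
    (Finset.Icc 1 m).filter (fun x => oddPermInv (oddPermInv x) = x) = Finset.Icc 4 m := by
  ext x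
  simp only [Finset.mem_filter, Finset.mem_Icc]
  constructor
  · rintro ⟨⟨ha, hb⟩, h3⟩
    by_contra hcon
    have : x = 1 ∨ x = 2 ∨ x = 3 := by omega
    rcases this with rfl | rfl | rfl <;> exact absurd h3 (by decide)
  · rintro ⟨h4, hx⟩
    refine ⟨⟨by omega, hx⟩, ?_⟩
    by_cases he : x % 2 = 0
    · have e1 : oddPermInv x = x + 1 := by unfold oddPermInv; split_ifs <;> omega
      rw [e1]; unfold oddPermInv; split_ifs <;> omega
    · have e1 : oddPermInv x = x - 1 := by unfold oddPermInv; split_ifs <;> omega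
      rw [e1]; unfold oddPermInv; split_ifs <;> omega

end helpers

section counting
variable {m : ℕ}

lemma cardI : (Finset.Icc 1 m).card = m := by simp

lemma sum_boole_card (I : Finset ℕ) (p : ℕ → Prop) [DecidablePred p] :
    ∑ x ∈ I, (if p x then (1:ℤ) else 0) = ((I.filter p).card : ℤ) := by
  simp [Finset.sum_boole]

def Eq1 (u v : ℕ) : ℤ := if u = v then 1 else 0

lemma sum_one_excl (c : ℕ) (hc : c ∈ Finset.Icc 1 m) :
    ∑ x ∈ Finset.Icc 1 m, (if ¬x = c then (1:ℤ) else 0) = (m:ℤ) - 1 := by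
  rw [show (∑ x ∈ Finset.Icc 1 m, (if ¬x = c then (1:ℤ) else 0))
      = ∑ x ∈ Finset.Icc 1 m, ((1:ℤ) - if x = c then 1 else 0) from
    Finset.sum_congr rfl (fun x _ => by split_ifs <;> simp)]
  rw [Finset.sum_sub_distrib, Finset.sum_const,
    Finset.sum_ite_eq' (Finset.Icc 1 m) c (fun _ => (1:ℤ)), if_pos hc]
  simp

lemma sum_pt (c : ℕ) (hc : c ∈ Finset.Icc 1 m) (F : ℕ → ℤ) :
    ∑ x ∈ Finset.Icc 1 m, (if x = c then F x else 0) = F c := by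
  rw [Finset.sum_ite_eq' (Finset.Icc 1 m) c F, if_pos hc]

lemma sum_two_excl (c₁ c₂ : ℕ) (hc₁ : c₁ ∈ Finset.Icc 1 m) (hc₂ : c₂ ∈ Finset.Icc 1 m) :
    ∑ x ∈ Finset.Icc 1 m, (if ¬x = c₁ ∧ ¬x = c₂ then (1:ℤ) else 0)
      = (m:ℤ) - 2 + Eq1 c₁ c₂ := by
  rw [show (∑ x ∈ Finset.Icc 1 m, (if ¬x = c₁ ∧ ¬x = c₂ then (1:ℤ) else 0))
      = ∑ x ∈ Finset.Icc 1 m,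
        ((1:ℤ) - (if x = c₁ then 1 else 0) - (if x = c₂ then 1 else 0)
          + (if x = c₁ then (if x = c₂ then (1:ℤ) else 0) else 0)) from
    Finset.sum_congr rfl (fun x _ => by
      by_cases h1 : x = c₁ <;> by_cases h2 : x = c₂ <;> simp [h1, h2])]
  rw [Finset.sum_add_distrib, Finset.sum_sub_distrib, Finset.sum_sub_distrib,
    Finset.sum_const, sum_pt c₁ hc₁, sum_pt c₂ hc₂,
    sum_pt c₁ hc₁ (fun x => if x = c₂ then (1:ℤ) else 0)]
  simp only [Eq1, Nat.card_Icc, Nat.add_sub_cancel, nsmul_eq_mul, mul_one]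
  split_ifs <;> omega

lemma sum_three_excl (c₁ c₂ c₃ : ℕ) (hc₁ : c₁ ∈ Finset.Icc 1 m)
    (hc₂ : c₂ ∈ Finset.Icc 1 m) (hc₃ : c₃ ∈ Finset.Icc 1 m) :
    ∑ x ∈ Finset.Icc 1 m, (if ¬x = c₁ ∧ ¬x = c₂ ∧ ¬x = c₃ then (1:ℤ) else 0)
      = (m:ℤ) - 3 + Eq1 c₁ c₂ + Eq1 c₁ c₃ + Eq1 c₂ c₃
        - (if c₁ = c₂ ∧ c₂ = c₃ then 1 else 0) := by
  rw [show (∑ x ∈ Finset.Icc 1 m, (if ¬x = c₁ ∧ ¬x = c₂ ∧ ¬x = c₃ then (1:ℤ) else 0))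
      = ∑ x ∈ Finset.Icc 1 m,
        ((1:ℤ) - (if x = c₁ then 1 else 0) - (if x = c₂ then 1 else 0)
          - (if x = c₃ then 1 else 0)
          + (if x = c₁ then (if x = c₂ then (1:ℤ) else 0) else 0)
          + (if x = c₁ then (if x = c₃ then (1:ℤ) else 0) else 0)
          + (if x = c₂ then (if x = c₃ then (1:ℤ) else 0) else 0)
          - (if x = c₁ then (if x = c₂ ∧ x = c₃ then (1:ℤ) else 0) else 0)) from
    Finset.sum_congr rfl (fun x _ => by
      by_cases h1 : x = c₁ <;> by_cases h2 : x = c₂ <;> by_cases h3 : x = c₃ <;>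
        simp [h1, h2, h3] <;> split_ifs <;> omega)]
  rw [Finset.sum_sub_distrib, Finset.sum_add_distrib, Finset.sum_add_distrib,
    Finset.sum_add_distrib, Finset.sum_sub_distrib, Finset.sum_sub_distrib,
    Finset.sum_sub_distrib, Finset.sum_const,
    sum_pt c₁ hc₁, sum_pt c₂ hc₂, sum_pt c₃ hc₃,
    sum_pt c₁ hc₁ (fun x => if x = c₂ then (1:ℤ) else 0),
    sum_pt c₁ hc₁ (fun x => if x = c₃ then (1:ℤ) else 0),
    sum_pt c₂ hc₂ (fun x => if x = c₃ then (1:ℤ) else 0),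
    sum_pt c₁ hc₁ (fun x => if x = c₂ ∧ x = c₃ then (1:ℤ) else 0)]
  simp only [Eq1, Nat.card_Icc, Nat.add_sub_cancel, nsmul_eq_mul, mul_one]
  split_ifs <;> omega

end counting

section main
variable {m : ℕ}

lemma Wval (hm : 7 ≤ m) (hm2 : m % 2 = 1) {x₁ x₂ : ℕ}
    (h₁ : x₁ ∈ Finset.Icc 1 m) (h₂ : x₂ ∈ Finset.Icc 1 m) :
    ∑ x₃ ∈ Finset.Icc 1 m,
      (if ¬x₃ = x₁ ∧ ¬x₃ = oddPerm x₂ then (1:ℤ) else 0) *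
        (∑ x₄ ∈ Finset.Icc 1 m,
          (if ¬x₄ = x₁ ∧ ¬x₄ = oddPerm x₂ ∧ ¬x₄ = oddPermInv x₃ then (1:ℤ) else 0))
    = ((m:ℤ)-3)*((m:ℤ)-2) + 2 + (2*(m:ℤ)-5) * Eq1 x₁ (oddPerm x₂)
      - Eq1 x₁ x₂ - Eq1 x₁ (oddPerm (oddPerm x₂)) := by
  have ha : oddPerm x₂ ∈ Finset.Icc 1 m := oddPerm_mem hm hm2 h₂
  have hfa : oddPerm (oddPerm x₂) ∈ Finset.Icc 1 m := oddPerm_mem hm hm2 ha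
  have hfx₁ : oddPerm x₁ ∈ Finset.Icc 1 m := oddPerm_mem hm hm2 h₁
  set a := oddPerm x₂ with hadef
  -- rewrite the inner x₄ sum
  rw [Finset.sum_congr rfl (fun x₃ hx₃ => by
    rw [sum_three_excl x₁ a (oddPermInv x₃) h₁ ha (oddPermInv_mem hm hm2 hx₃)])]
  -- pointwise rewrite conditions involving oddPermInv x₃ into conditions on x₃
  rw [Finset.sum_congr rfl (fun x₃ hx₃ => show
      (if ¬x₃ = x₁ ∧ ¬x₃ = a then (1:ℤ) else 0) *
        ((m:ℤ) - 3 + Eq1 x₁ a + Eq1 x₁ (oddPermInv x₃) + Eq1 a (oddPermInv x₃)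
          - (if x₁ = a ∧ a = oddPermInv x₃ then 1 else 0))
      = ((m:ℤ) - 3 + Eq1 x₁ a) * (if ¬x₃ = x₁ ∧ ¬x₃ = a then (1:ℤ) else 0)
        + (if x₃ = oddPerm x₁ then (if ¬x₃ = x₁ ∧ ¬x₃ = a then (1:ℤ) else 0) else 0)
        + (if x₃ = oddPerm a then (if ¬x₃ = x₁ ∧ ¬x₃ = a then (1:ℤ) else 0) else 0)
        - (if x₃ = oddPerm a then
            Eq1 x₁ a * (if ¬x₃ = x₁ ∧ ¬x₃ = a then (1:ℤ) else 0) else 0) from by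
    have hiff1 : x₁ = oddPermInv x₃ ↔ x₃ = oddPerm x₁ :=
      ⟨fun h => by rw [h, inv_right hx₃], fun h => by rw [h, inv_left h₁]⟩
    have hiff2 : a = oddPermInv x₃ ↔ x₃ = oddPerm a :=
      ⟨fun h => by rw [h, inv_right hx₃], fun h => by rw [h, inv_left ha]⟩
    simp only [Eq1, hiff1, hiff2]
    by_cases hc2 : x₃ = oddPerm x₁ <;> by_cases hc3 : x₃ = oddPerm a <;>
      by_cases hc4 : x₁ = a <;> simp [hc2, hc3, hc4] <;> split_ifs <;> omega)]
  rw [Finset.sum_sub_distrib, Finset.sum_add_distrib, Finset.sum_add_distrib,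
    ← Finset.mul_sum, sum_two_excl x₁ a h₁ ha,
    sum_pt (oddPerm x₁) hfx₁ (fun x₃ => if ¬x₃ = x₁ ∧ ¬x₃ = a then (1:ℤ) else 0),
    sum_pt (oddPerm a) hfa (fun x₃ => if ¬x₃ = x₁ ∧ ¬x₃ = a then (1:ℤ) else 0),
    sum_pt (oddPerm a) hfa
      (fun x₃ => Eq1 x₁ a * (if ¬x₃ = x₁ ∧ ¬x₃ = a then (1:ℤ) else 0))]
  -- evaluate the three point values
  have v1 : (if ¬oddPerm x₁ = x₁ ∧ ¬oddPerm x₁ = a then (1:ℤ) else 0)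
      = 1 - Eq1 x₁ x₂ := by
    have h5 : ¬oddPerm x₁ = x₁ := oddPerm_ne h₁
    have hinj : oddPerm x₁ = a ↔ x₁ = x₂ :=
      ⟨fun h => by rw [← inv_left h₁, h, hadef, inv_left h₂], fun h => by rw [h]⟩
    simp only [Eq1, hinj]
    split_ifs <;> omega
  have v2 : (if ¬oddPerm a = x₁ ∧ ¬oddPerm a = a then (1:ℤ) else 0)
      = 1 - Eq1 x₁ (oddPerm a) := by
    have h5 : ¬oddPerm a = a := oddPerm_ne ha
    simp only [Eq1]
    split_ifs <;> omega
  rw [v1, v2]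
  by_cases hE : x₁ = a
  · have h6 : ¬(x₁ = oddPerm a) := by rw [hE]; exact fun h => oddPerm_ne ha h.symm
    have h7 : ¬(a = oddPerm a) := fun h => oddPerm_ne ha h.symm
    simp [Eq1, hE, h6, h7]
    ring
  · simp [Eq1, hE]
    ring

end main

lemma Hval (hm : 7 ≤ m) (hm2 : m % 2 = 1) {x₁ : ℕ} (h₁ : x₁ ∈ Finset.Icc 1 m) :
    ∑ x₂ ∈ Finset.Icc 1 m,
      (if ¬x₂ = x₁ then
        (((m:ℤ)-3)*((m:ℤ)-2) + 2 + (2*(m:ℤ)-5) * Eq1 x₁ (oddPerm x₂)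
          - Eq1 x₁ x₂ - Eq1 x₁ (oddPerm (oddPerm x₂))) else 0)
    = (((m:ℤ)-3)*((m:ℤ)-2) + 2) * ((m:ℤ)-1) + (2*(m:ℤ)-5) - 1
      + (if oddPermInv (oddPermInv x₁) = x₁ then (1:ℤ) else 0) := by
  have hg : oddPermInv x₁ ∈ Finset.Icc 1 m := oddPermInv_mem hm hm2 h₁
  have hgg : oddPermInv (oddPermInv x₁) ∈ Finset.Icc 1 m := oddPermInv_mem hm hm2 hg
  rw [Finset.sum_congr rfl (fun x₂ hx₂ => show
      (if ¬x₂ = x₁ then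
        (((m:ℤ)-3)*((m:ℤ)-2) + 2 + (2*(m:ℤ)-5) * Eq1 x₁ (oddPerm x₂)
          - Eq1 x₁ x₂ - Eq1 x₁ (oddPerm (oddPerm x₂))) else 0)
      = (((m:ℤ)-3)*((m:ℤ)-2) + 2) * (if ¬x₂ = x₁ then (1:ℤ) else 0)
        + (2*(m:ℤ)-5) * (if x₂ = oddPermInv x₁ then (if ¬x₂ = x₁ then (1:ℤ) else 0) else 0)
        - (if x₂ = x₁ then (if ¬x₂ = x₁ then (1:ℤ) else 0) else 0)
        - (if x₂ = oddPermInv (oddPermInv x₁) then (if ¬x₂ = x₁ then (1:ℤ) else 0) else 0)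
      from by
    have hf2 : oddPerm x₂ ∈ Finset.Icc 1 m := oddPerm_mem hm hm2 hx₂
    have hiff1 : x₁ = oddPerm x₂ ↔ x₂ = oddPermInv x₁ :=
      ⟨fun h => by rw [h, inv_left hx₂], fun h => by rw [h, inv_right h₁]⟩
    have hiff2 : x₁ = x₂ ↔ x₂ = x₁ := eq_comm
    have hiff3 : x₁ = oddPerm (oddPerm x₂) ↔ x₂ = oddPermInv (oddPermInv x₁) :=
      ⟨fun h => by rw [h, inv_left hf2, inv_left hx₂],
       fun h => by rw [h, inv_right hg, inv_right h₁]⟩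
    simp only [Eq1, hiff1, hiff2, hiff3]
    split_ifs <;> omega)]
  rw [Finset.sum_sub_distrib, Finset.sum_sub_distrib, Finset.sum_add_distrib,
    ← Finset.mul_sum, ← Finset.mul_sum, sum_one_excl x₁ h₁,
    sum_pt (oddPermInv x₁) hg (fun x₂ => if ¬x₂ = x₁ then (1:ℤ) else 0),
    sum_pt x₁ h₁ (fun x₂ => if ¬x₂ = x₁ then (1:ℤ) else 0),
    sum_pt (oddPermInv (oddPermInv x₁)) hgg (fun x₂ => if ¬x₂ = x₁ then (1:ℤ) else 0)]
  have e1 : (if ¬oddPermInv x₁ = x₁ then (1:ℤ) else 0) = 1 := by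
    rw [if_pos (oddPermInv_ne h₁)]
  have e2 : (if ¬x₁ = x₁ then (1:ℤ) else 0) = 0 := by simp
  have e3 : (if ¬oddPermInv (oddPermInv x₁) = x₁ then (1:ℤ) else 0)
      = 1 - (if oddPermInv (oddPermInv x₁) = x₁ then (1:ℤ) else 0) := by
    split_ifs <;> omega
  rw [e1, e2, e3]
  ring

/-- For odd `m ≥ 7`, the number of `(x₁,x₂,x₃,x₄) ∈ {1,…,m}⁴` with
`x₂ ≠ x₁`, `x₃ ≠ x₁`, `x₄ ≠ x₁`, `x₃ ≠ f(x₂)`, `x₄ ≠ f(x₂)`, `x₄ ≠ f⁻¹(x₃)`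
equals `m⁴ - 6m³ + 15m² - 13m - 3`. -/
theorem dual_DP_K4_odd_extremal (m : ℕ) (hm : 7 ≤ m) (hodd : Odd m) :
    ((((Finset.Icc 1 m) ×ˢ (Finset.Icc 1 m) ×ˢ (Finset.Icc 1 m) ×ˢ (Finset.Icc 1 m)).filter
        (fun p : ℕ × ℕ × ℕ × ℕ =>
          p.2.1 ≠ p.1 ∧ p.2.2.1 ≠ p.1 ∧ p.2.2.2 ≠ p.1 ∧
          p.2.2.1 ≠ oddPerm p.2.1 ∧ p.2.2.2 ≠ oddPerm p.2.1 ∧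
          p.2.2.2 ≠ oddPermInv p.2.2.1)).card : ℤ)
      = (m : ℤ) ^ 4 - 6 * (m : ℤ) ^ 3 + 15 * (m : ℤ) ^ 2 - 13 * m - 3 := by
  have hm2 : m % 2 = 1 := Nat.odd_iff.mp hodd
  rw [Finset.card_filter]
  push_cast
  rw [Finset.sum_product]
  have step1 : ∀ x₁ ∈ Finset.Icc 1 m,
      (∑ p ∈ (Finset.Icc 1 m) ×ˢ (Finset.Icc 1 m) ×ˢ (Finset.Icc 1 m),
        if ¬p.1 = x₁ ∧ ¬p.2.1 = x₁ ∧ ¬p.2.2 = x₁ ∧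
            ¬p.2.1 = oddPerm p.1 ∧ ¬p.2.2 = oddPerm p.1 ∧
            ¬p.2.2 = oddPermInv p.2.1 then (1:ℤ) else 0)
      = (((m:ℤ)-3)*((m:ℤ)-2) + 2) * ((m:ℤ)-1) + (2*(m:ℤ)-5) - 1
        + (if oddPermInv (oddPermInv x₁) = x₁ then (1:ℤ) else 0) := by
    intro x₁ hx₁
    rw [Finset.sum_product, Finset.sum_congr rfl (fun x₂ hx₂ => ?_)]
    · exact Hval hm hm2 hx₁
    · rw [Finset.sum_product]
      have inner : (∑ x₃ ∈ Finset.Icc 1 m, ∑ x₄ ∈ Finset.Icc 1 m,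
          if ¬x₂ = x₁ ∧ ¬x₃ = x₁ ∧ ¬x₄ = x₁ ∧
              ¬x₃ = oddPerm x₂ ∧ ¬x₄ = oddPerm x₂ ∧
              ¬x₄ = oddPermInv x₃ then (1:ℤ) else 0)
          = if ¬x₂ = x₁ then
              (∑ x₃ ∈ Finset.Icc 1 m,
                (if ¬x₃ = x₁ ∧ ¬x₃ = oddPerm x₂ then (1:ℤ) else 0) *
                  (∑ x₄ ∈ Finset.Icc 1 m,
                    (if ¬x₄ = x₁ ∧ ¬x₄ = oddPerm x₂ ∧ ¬x₄ = oddPermInv x₃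
                      then (1:ℤ) else 0))) else 0 := by
        by_cases h : ¬x₂ = x₁
        · rw [if_pos h]
          refine Finset.sum_congr rfl fun x₃ _ => ?_
          rw [Finset.mul_sum]
          refine Finset.sum_congr rfl fun x₄ _ => ?_
          split_ifs <;> first | rfl | omega | (exfalso; tauto)
        · rw [if_neg h]
          refine Finset.sum_eq_zero fun x₃ _ => Finset.sum_eq_zero fun x₄ _ => ?_
          rw [if_neg]; tauto
      rw [inner]
      by_cases h : ¬x₂ = x₁
      · rw [if_pos h, if_pos h, Wval hm hm2 hx₁ hx₂]
      · rw [if_neg h, if_neg h]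
  rw [Finset.sum_congr rfl step1]
  rw [Finset.sum_add_distrib, Finset.sum_const, sum_boole_card, gg_filter hm]
  have c1 : ((Finset.Icc 1 m).card : ℤ) = m := by rw [Nat.card_Icc]; omega
  have c2 : ((Finset.Icc 4 m).card : ℤ) = (m:ℤ) - 3 := by rw [Nat.card_Icc]; omega
  rw [nsmul_eq_mul]
  rw [c1, c2]
  ring
end

section
/- Let m ≥ 7 be odd and let σ_{ij}, for 1 ≤ i < j ≤ 4, be six permutations of {1,…,m}. Then the number of tuples (x₁,x₂,x₃,x₄) ∈ {1,…,m}⁴ satisfying x_j ≠ σ_{ij}(x_i) for all 1 ≤ i < j ≤ 4 is at most m⁴ − 6m³ + 15m² − 13m − 3. -/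
/-!
Relabelling the colours at vertices 2, 3 and 4 turns σ₁₂, σ₁₃, σ₁₄ into the identity and leaves
permutations α, β, γ on the edges 23, 24, 34. Vertex 4 then has `m - #{x₁, β x₂, γ x₃}` choices,
so the count is `m - 3` times the number of colourings of the triangle 123 plus the number of
coincidences among these three forbidden colours. Summing out one variable in each kind of
coincidence bounds it through the fixed-point counts of `β⁻¹α`, `αγ` and `γ⁻¹β`, and these add
up to at most `3m - 3 + (m - 3)(fix α + fix β + fix γ)`: a permutation other than `1` moves at
least two points, and if α, β, γ are derangements and two of the three products are `1`, the
third is conjugate to `α²`, which fixes at most `m - 3` points because α pairs up the fixed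
points of `α²` and `m` is odd.
-/

open Finset Equiv

namespace DPColoringK4

lemma even_card_of_involution {ι : Type*} {s : Finset ι} (g : ι → ι)
    (hg_mem : ∀ a ∈ s, g a ∈ s) (hg_inv : ∀ a ∈ s, g (g a) = a) (hg_ne : ∀ a ∈ s, g a ≠ a) :
    Even #s := by
  rw [← ZMod.natCast_eq_zero_iff_even, card_eq_sum_ones, Nat.cast_sum, Nat.cast_one]
  exact sum_involution (fun a _ => g a) (fun _ _ => by decide) (fun a ha _ => hg_ne a ha)
    hg_mem hg_inv

variable {X : Type*} [Fintype X]

lemma sum_boole_and_left (p : Prop) [Decidable p] (q : X → Prop) [DecidablePred q] :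
    ∑ x, (if p ∧ q x then (1 : ℤ) else 0) = if p then (#{x | q x} : ℤ) else 0 := by
  split_ifs with hp <;> simp [hp]

variable [DecidableEq X]

lemma sum_boole_eq_and (e : X) (p : X → Prop) [DecidablePred p] :
    ∑ x, (if e = x ∧ p x then (1 : ℤ) else 0) = if p e then 1 else 0 := by
  simp only [ite_and, sum_ite_eq, mem_univ, if_true]

lemma card_ne (x : X) : (#{y | x ≠ y} : ℤ) = Fintype.card X - 1 := by
  rw [filter_ne, eq_sub_iff_add_eq, ← card_univ]
  exact_mod_cast card_erase_add_one (mem_univ x)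

lemma card_ne_ne (x y : X) :
    (#{z | z ≠ x ∧ z ≠ y} : ℤ) = Fintype.card X - 2 + if x = y then 1 else 0 := by
  have h : ({z | z ≠ x ∧ z ≠ y} : Finset X) = {x, y}ᶜ := by ext; simp
  rw [h, card_compl, Nat.cast_sub (card_le_univ _)]
  by_cases hxy : x = y
  · simp [hxy]; ring
  · simp [card_pair hxy, hxy]

lemma card_ne_ne_ne (x y z : X) :
    (#{w | w ≠ x ∧ w ≠ y ∧ w ≠ z} : ℤ) = Fintype.card X - 3 + (if y = x then 1 else 0)
      + (if z = x then 1 else 0) + (if z = y ∧ z ≠ x then 1 else 0) := by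
  have h : ({w | w ≠ x ∧ w ≠ y ∧ w ≠ z} : Finset X) = {x, y, z}ᶜ := by ext; simp
  rw [h, card_compl, Nat.cast_sub (card_le_univ _)]
  clear h
  by_cases hyx : y = x <;> by_cases hzx : z = x <;> by_cases hzy : z = y <;>
    simp_all [card_insert_of_notMem, eq_comm] <;> ring

lemma card_ne_ne_ne_le (x y z : X) :
    (#{w | w ≠ x ∧ w ≠ y ∧ w ≠ z} : ℤ) ≤ Fintype.card X - 3 + (if y = x then 1 else 0)
      + (if z = x then 1 else 0) + (if z = y then 1 else 0) := by
  rw [card_ne_ne_ne]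
  gcongr
  split_ifs <;> simp_all

def numFixedPoints (π : Perm X) : ℕ := #{x | π x = x}

@[simp] lemma numFixedPoints_one : numFixedPoints (1 : Perm X) = Fintype.card X := by
  simp [numFixedPoints]

lemma numFixedPoints_le (π : Perm X) : numFixedPoints π ≤ Fintype.card X := card_le_univ _

lemma numFixedPoints_eq_zero_iff {π : Perm X} : numFixedPoints π = 0 ↔ ∀ x, π x ≠ x := by
  simp [numFixedPoints, filter_eq_empty_iff]

lemma numFixedPoints_add_card_support (π : Perm X) :
    numFixedPoints π + #π.support = Fintype.card X :=
  card_filter_add_card_filter_not _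

lemma numFixedPoints_add_two_le {π : Perm X} (h : π ≠ 1) :
    numFixedPoints π + 2 ≤ Fintype.card X := by
  have := Perm.one_lt_card_support_of_ne_one h
  have := numFixedPoints_add_card_support π
  omega

lemma numFixedPoints_conj (π ρ : Perm X) : numFixedPoints (ρ⁻¹ * π * ρ) = numFixedPoints π :=
  card_equiv ρ fun x => by
    simp only [mem_filter, mem_univ, true_and]
    simp [Perm.inv_def, symm_apply_eq]

lemma numFixedPoints_inv (π : Perm X) : numFixedPoints π⁻¹ = numFixedPoints π := by
  simp only [numFixedPoints, Perm.inv_eq_iff_eq]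
  simp only [eq_comm]

lemma card_ne_apply (π : Perm X) :
    (#{x | x ≠ π x} : ℤ) = Fintype.card X - numFixedPoints π := by
  rw [filter_congr fun x _ => ne_comm, eq_sub_iff_add_eq, numFixedPoints, ← card_univ, add_comm]
  exact_mod_cast card_filter_add_card_filter_not (fun x => π x = x)

lemma card_apply_eq_apply (π ρ : Perm X) : #{x | π x = ρ x} = numFixedPoints (π⁻¹ * ρ) := by
  simp only [numFixedPoints, Perm.mul_apply, Perm.inv_eq_iff_eq]
  simp only [eq_comm]

lemma even_numFixedPoints_mul_self {α : Perm X} (hα : ∀ x, α x ≠ x) :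
    Even (numFixedPoints (α * α)) :=
  even_card_of_involution α
    (fun _ hx => mem_filter.2 ⟨mem_univ _, congrArg α (mem_filter.1 hx).2⟩)
    (fun _ hx => (mem_filter.1 hx).2) fun x _ => hα x

lemma numFixedPoints_mul_self_add_three_le (hodd : Odd (Fintype.card X)) {α : Perm X}
    (hα : ∀ x, α x ≠ x) : numFixedPoints (α * α) + 3 ≤ Fintype.card X := by
  have heven := even_numFixedPoints_mul_self hα
  have hsum := numFixedPoints_add_card_support (α * α)
  have hne := Perm.card_support_ne_one (α * α)
  rw [← hsum] at hodd
  rcases heven with ⟨k, hk⟩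
  rcases hodd with ⟨j, hj⟩
  omega

lemma numFixedPoints_add_add_add_three_le {u v w : Perm X}
    (h : numFixedPoints (w * u * v) + 3 ≤ Fintype.card X) :
    numFixedPoints u + numFixedPoints v + numFixedPoints w + 3 ≤ 3 * Fintype.card X := by
  -- if two of `u`, `v`, `w` are `1`, the third is `w * u * v`
  have key (π : Perm X) : π = 1 ∨ numFixedPoints π + 2 ≤ Fintype.card X :=
    (eq_or_ne π 1).imp_right numFixedPoints_add_two_le
  have := numFixedPoints_le u
  have := numFixedPoints_le v
  have := numFixedPoints_le w
  rcases key u with rfl | _ <;> rcases key v with rfl | _ <;> rcases key w with rfl | _ <;>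
    simp_all <;> omega

lemma numFixedPoints_products_le (hodd : Odd (Fintype.card X)) (h6 : 6 ≤ Fintype.card X)
    (α β γ : Perm X) :
    (numFixedPoints (β⁻¹ * α) + numFixedPoints (α * γ) + numFixedPoints (γ⁻¹ * β) : ℤ)
      ≤ 3 * Fintype.card X - 3
        + (Fintype.card X - 3) * (numFixedPoints α + numFixedPoints β + numFixedPoints γ) := by
  by_cases hder : numFixedPoints α = 0 ∧ numFixedPoints β = 0 ∧ numFixedPoints γ = 0
  · obtain ⟨hα, hβ, hγ⟩ := hder
    have hconj : γ⁻¹ * β * (β⁻¹ * α) * (α * γ) = γ⁻¹ * (α * α) * γ := by group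
    have := numFixedPoints_add_add_add_three_le (u := β⁻¹ * α) (v := α * γ) (w := γ⁻¹ * β) (by
      rw [hconj, numFixedPoints_conj]
      exact numFixedPoints_mul_self_add_three_le hodd (numFixedPoints_eq_zero_iff.1 hα))
    rw [hα, hβ, hγ]
    omega
  · have hpos : (1 : ℤ) ≤ numFixedPoints α + numFixedPoints β + numFixedPoints γ := by omega
    have h6' : (6 : ℤ) ≤ Fintype.card X := by exact_mod_cast h6
    have := numFixedPoints_le (β⁻¹ * α)
    have := numFixedPoints_le (α * γ)
    have := numFixedPoints_le (γ⁻¹ * β)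
    nlinarith

def colorings (σ12 σ13 σ14 σ23 σ24 σ34 : Perm X) : Finset (X × X × X × X) :=
  {p | p.2.1 ≠ σ12 p.1 ∧ p.2.2.1 ≠ σ13 p.1 ∧ p.2.2.2 ≠ σ14 p.1 ∧
    p.2.2.1 ≠ σ23 p.2.1 ∧ p.2.2.2 ≠ σ24 p.2.1 ∧ p.2.2.2 ≠ σ34 p.2.2.1}

lemma card_colorings_eq_one_one_one (σ12 σ13 σ14 σ23 σ24 σ34 : Perm X) :
    #(colorings σ12 σ13 σ14 σ23 σ24 σ34)
      = #(colorings 1 1 1 (σ13⁻¹ * σ23 * σ12) (σ14⁻¹ * σ24 * σ12) (σ14⁻¹ * σ34 * σ13)) := by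
  refine (card_equiv ((Equiv.refl X).prodCongr (σ12.prodCongr (σ13.prodCongr σ14))) ?_).symm
  rintro ⟨a, b, c, d⟩
  simp only [colorings, mem_filter, mem_univ, true_and, prodCongr_apply, coe_refl, Prod.map,
    id_eq, Perm.one_apply, Perm.mul_apply, ne_eq, EmbeddingLike.apply_eq_iff_eq,
    Perm.eq_inv_iff_eq]

/-- Vertex 4 avoids `a`, `β b` and `γ c`; the last three sums count the coincidences among these
three colours. -/
lemma card_colorings_one_one_one_eq (α β γ : Perm X) :
    (#(colorings 1 1 1 α β γ) : ℤ)
      = (Fintype.card X - 3) * ∑ a, ∑ b, ∑ c, (if b ≠ a ∧ c ≠ a ∧ c ≠ α b then 1 else 0)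
        + ∑ a, ∑ b, ∑ c, (if β b = a ∧ b ≠ a ∧ c ≠ a ∧ c ≠ α b then 1 else 0)
        + ∑ a, ∑ b, ∑ c, (if γ c = a ∧ b ≠ a ∧ c ≠ a ∧ c ≠ α b then 1 else 0)
        + ∑ a, ∑ b, ∑ c,
            (if γ c = β b ∧ γ c ≠ a ∧ b ≠ a ∧ c ≠ a ∧ c ≠ α b then 1 else 0) := by
  have hpt (a b c : X) : ∑ d, (if b ≠ a ∧ c ≠ a ∧ d ≠ a ∧ c ≠ α b ∧ d ≠ β b ∧ d ≠ γ c
        then (1 : ℤ) else 0)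
      = (Fintype.card X - 3) * (if b ≠ a ∧ c ≠ a ∧ c ≠ α b then 1 else 0)
        + (if β b = a ∧ b ≠ a ∧ c ≠ a ∧ c ≠ α b then 1 else 0)
        + (if γ c = a ∧ b ≠ a ∧ c ≠ a ∧ c ≠ α b then 1 else 0)
        + (if γ c = β b ∧ γ c ≠ a ∧ b ≠ a ∧ c ≠ a ∧ c ≠ α b then 1 else 0) := by
    have hiff (d : X) : (b ≠ a ∧ c ≠ a ∧ d ≠ a ∧ c ≠ α b ∧ d ≠ β b ∧ d ≠ γ c)
        ↔ (b ≠ a ∧ c ≠ a ∧ c ≠ α b) ∧ (d ≠ a ∧ d ≠ β b ∧ d ≠ γ c) := by tauto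
    simp only [hiff, sum_boole_and_left, card_ne_ne_ne]
    by_cases hT : b ≠ a ∧ c ≠ a ∧ c ≠ α b <;> simp [hT]
  have hcol : colorings 1 1 1 α β γ = ({p | p.2.1 ≠ p.1 ∧ p.2.2.1 ≠ p.1 ∧ p.2.2.2 ≠ p.1 ∧
      p.2.2.1 ≠ α p.2.1 ∧ p.2.2.2 ≠ β p.2.1 ∧ p.2.2.2 ≠ γ p.2.2.1} : Finset (X × X × X × X)) :=
    filter_congr fun _ _ => by simp only [Perm.one_apply]
  rw [hcol, card_filter]
  push_cast
  simp only [Fintype.sum_prod_type, hpt, sum_add_distrib, ← mul_sum]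

lemma sum_card_ne_ne_le (π ρ : Perm X) :
    ∑ x, (if x ≠ π x then (#{y | y ≠ π x ∧ y ≠ ρ x} : ℤ) else 0)
      ≤ (Fintype.card X - 2) * (Fintype.card X - numFixedPoints π) + numFixedPoints (π⁻¹ * ρ) := by
  calc _ ≤ ∑ x, ((Fintype.card X - 2) * (if x ≠ π x then 1 else 0)
          + if π x = ρ x then 1 else 0 : ℤ) := by
        refine sum_le_sum fun x _ => ?_
        rw [card_ne_ne]
        split_ifs <;> linarith
    _ = _ := by
        rw [sum_add_distrib, ← mul_sum, sum_boole, sum_boole, card_ne_apply, card_apply_eq_apply]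

lemma sum_triangle_eq (α : Perm X) :
    ∑ a, ∑ b, ∑ c, (if b ≠ a ∧ c ≠ a ∧ c ≠ α b then (1 : ℤ) else 0)
      = Fintype.card X * (Fintype.card X - 1) * (Fintype.card X - 2)
        + Fintype.card X - numFixedPoints α := by
  calc _ = ∑ a, ∑ b, if b ≠ a then (#{c | c ≠ a ∧ c ≠ α b} : ℤ) else 0 :=
        sum_congr rfl fun a _ => sum_congr rfl fun b _ => sum_boole_and_left _ _
    _ = ∑ a, ∑ b, ((Fintype.card X - 2) * (if b ≠ a then 1 else 0)
          + if α b = a ∧ b ≠ a then 1 else 0 : ℤ) := by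
        refine sum_congr rfl fun a _ => sum_congr rfl fun b _ => ?_
        rw [card_ne_ne]
        by_cases hba : b = a
        · simp [hba]
        · by_cases hab : α b = a
          · simp [hba, hab]
          · simp [hba, hab, Ne.symm hab]
    _ = ∑ b, ((Fintype.card X - 1) * (Fintype.card X - 2)
          + if b ≠ α b then 1 else 0 : ℤ) := by
        rw [sum_comm]
        refine sum_congr rfl fun b _ => ?_
        rw [sum_add_distrib, ← mul_sum, sum_boole, card_ne, sum_boole_eq_and]
        ring
    _ = _ := by
        rw [sum_add_distrib, sum_boole, card_ne_apply, sum_const, card_univ, nsmul_eq_mul]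
        ring

lemma sum_triangle_coincide₁₂_le (α β : Perm X) :
    ∑ a, ∑ b, ∑ c, (if β b = a ∧ b ≠ a ∧ c ≠ a ∧ c ≠ α b then (1 : ℤ) else 0)
      ≤ (Fintype.card X - 2) * (Fintype.card X - numFixedPoints β) + numFixedPoints (β⁻¹ * α) :=
  calc _ = ∑ b, ∑ c, ∑ a, (if β b = a ∧ b ≠ a ∧ c ≠ a ∧ c ≠ α b then (1 : ℤ) else 0) := by
        rw [sum_comm]
        exact sum_congr rfl fun _ _ => sum_comm
    _ = ∑ b, if b ≠ β b then (#{c | c ≠ β b ∧ c ≠ α b} : ℤ) else 0 := by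
        refine sum_congr rfl fun b _ => ?_
        simp only [sum_boole_eq_and, sum_boole_and_left]
    _ ≤ _ := sum_card_ne_ne_le β α

lemma sum_triangle_coincide₁₃_le (α γ : Perm X) :
    ∑ a, ∑ b, ∑ c, (if γ c = a ∧ b ≠ a ∧ c ≠ a ∧ c ≠ α b then (1 : ℤ) else 0)
      ≤ (Fintype.card X - 2) * (Fintype.card X - numFixedPoints γ) + numFixedPoints (α * γ) :=
  calc _ = ∑ a, ∑ c, ∑ b, (if γ c = a ∧ c ≠ a ∧ b ≠ a ∧ b ≠ α⁻¹ c then (1 : ℤ) else 0) := by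
        refine sum_congr rfl fun a _ => sum_comm.trans <|
          sum_congr rfl fun c _ => sum_congr rfl fun b _ => if_congr ?_ rfl rfl
        simp only [ne_eq, Perm.eq_inv_iff_eq, eq_comm (a := α b)]
        tauto
    _ ≤ _ := sum_triangle_coincide₁₂_le α⁻¹ γ
    _ = _ := by rw [← mul_inv_rev, numFixedPoints_inv]

lemma sum_triangle_coincide₂₃_le (α β γ : Perm X) :
    ∑ a, ∑ b, ∑ c, (if γ c = β b ∧ γ c ≠ a ∧ b ≠ a ∧ c ≠ a ∧ c ≠ α b then (1 : ℤ) else 0)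
      ≤ Fintype.card X * (Fintype.card X - 3) + numFixedPoints β + numFixedPoints (γ⁻¹ * β)
        + numFixedPoints γ := by
  calc _ ≤ ∑ b, ∑ a, ∑ c, (if (γ⁻¹ * β) b = c ∧ (a ≠ b ∧ a ≠ β b ∧ a ≠ (γ⁻¹ * β) b)
          then (1 : ℤ) else 0) := by
        rw [sum_comm]
        refine sum_le_sum fun b _ => sum_le_sum fun a _ => sum_le_sum fun c _ => ?_
        split_ifs with h h'
        · rfl
        · obtain ⟨hγ, ha, hb, hc, -⟩ := h
          have hc' : (γ⁻¹ * β) b = c := (Perm.eq_inv_iff_eq.2 hγ).symm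
          exact absurd ⟨hc', Ne.symm hb, hγ ▸ Ne.symm ha, hc' ▸ Ne.symm hc⟩ h'
        · exact zero_le_one
        · rfl
    _ = ∑ b, (#{a | a ≠ b ∧ a ≠ β b ∧ a ≠ (γ⁻¹ * β) b} : ℤ) := by
        simp only [sum_boole_eq_and]
        simp only [sum_boole]
    _ ≤ ∑ b, (Fintype.card X - 3 + (if β b = b then 1 else 0)
          + (if (γ⁻¹ * β) b = b then 1 else 0) + (if (γ⁻¹ * β) b = β b then 1 else 0) : ℤ) :=
        sum_le_sum fun b _ => card_ne_ne_ne_le _ _ _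
    _ = _ := by
        have hγ : #{b | (γ⁻¹ * β) b = β b} = numFixedPoints γ⁻¹ :=
          card_equiv β fun _ => by
            simp only [mem_filter, mem_univ, true_and]
            rfl
        simp only [sum_add_distrib, sum_boole, sum_const, card_univ, nsmul_eq_mul, hγ,
          numFixedPoints_inv]
        rfl

theorem card_colorings_le (hodd : Odd (Fintype.card X)) (h6 : 6 ≤ Fintype.card X)
    (σ12 σ13 σ14 σ23 σ24 σ34 : Perm X) :
    (#(colorings σ12 σ13 σ14 σ23 σ24 σ34) : ℤ)
      ≤ (Fintype.card X : ℤ) ^ 4 - 6 * (Fintype.card X : ℤ) ^ 3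
        + 15 * (Fintype.card X : ℤ) ^ 2 - 13 * Fintype.card X - 3 := by
  set α := σ13⁻¹ * σ23 * σ12
  set β := σ14⁻¹ * σ24 * σ12
  set γ := σ14⁻¹ * σ34 * σ13
  rw [card_colorings_eq_one_one_one, card_colorings_one_one_one_eq, sum_triangle_eq]
  have hA := sum_triangle_coincide₁₂_le α β
  have hB := sum_triangle_coincide₁₃_le α γ
  have hC := sum_triangle_coincide₂₃_le α β γ
  have hkey := numFixedPoints_products_le hodd h6 α β γ
  linarith

end DPColoringK4

/-- For odd `m ≥ 7` and any six permutations `σᵢⱼ` (`1 ≤ i < j ≤ 4`) of `{1,…,m}`,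
the number of `(x₁,x₂,x₃,x₄) ∈ {1,…,m}⁴` with `xⱼ ≠ σᵢⱼ xᵢ` for all `i < j`
is at most `m⁴ - 6m³ + 15m² - 13m - 3`. -/
theorem dual_DP_K4_odd_upper_bound
    (m : ℕ) (hm : 7 ≤ m) (hodd : Odd m)
    (σ12 σ13 σ14 σ23 σ24 σ34 : Equiv.Perm (Fin m)) :
    ((Finset.univ.filter (fun p : Fin m × Fin m × Fin m × Fin m =>
        p.2.1 ≠ σ12 p.1 ∧ p.2.2.1 ≠ σ13 p.1 ∧ p.2.2.2 ≠ σ14 p.1 ∧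
        p.2.2.1 ≠ σ23 p.2.1 ∧ p.2.2.2 ≠ σ24 p.2.1 ∧ p.2.2.2 ≠ σ34 p.2.2.1)).card : ℤ)
      ≤ (m : ℤ) ^ 4 - 6 * (m : ℤ) ^ 3 + 15 * (m : ℤ) ^ 2 - 13 * m - 3 := by
  have h := DPColoringK4.card_colorings_le (X := Fin m) (by rwa [Fintype.card_fin])
    (by rw [Fintype.card_fin]; omega) σ12 σ13 σ14 σ23 σ24 σ34
  rwa [Fintype.card_fin] at h
end

section
/- There do not exist a natural number N and a polynomial p with real coefficients such that for all integers m ≥ N, p(m) = m⁴ − 6m³ + 15m² − 13m when m is even and p(m) = m⁴ − 6m³ + 15m² − 13m − 3 when m is odd. -/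
/-- There is no natural number `N` and polynomial `p` over `ℝ` such that for all
integers `m ≥ N`, `p(m) = m⁴ - 6m³ + 15m² - 13m` when `m` is even and
`p(m) = m⁴ - 6m³ + 15m² - 13m - 3` when `m` is odd. -/
theorem no_polynomial_representation :
    ¬ ∃ (N : ℕ) (p : Polynomial ℝ), ∀ m : ℤ, (N : ℤ) ≤ m →
      (Even m → p.eval (m : ℝ) = (m : ℝ) ^ 4 - 6 * (m : ℝ) ^ 3 + 15 * (m : ℝ) ^ 2 - 13 * m) ∧
      (Odd m → p.eval (m : ℝ) = (m : ℝ) ^ 4 - 6 * (m : ℝ) ^ 3 + 15 * (m : ℝ) ^ 2 - 13 * m - 3) := by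
  rintro ⟨N, p, h⟩
  set q : Polynomial ℝ :=
    p - (Polynomial.X ^ 4 - 6 * Polynomial.X ^ 3 + 15 * Polynomial.X ^ 2
      - 13 * Polynomial.X) with hq
  have hq0 : q = 0 := by
    apply Polynomial.eq_zero_of_infinite_isRoot
    apply Set.infinite_of_injective_forall_mem
      (f := fun k : ℕ => ((2 * (N + k) : ℤ) : ℝ))
    case hi =>
      intro a b hab
      simp only at hab
      have : (2 * (N + a) : ℤ) = 2 * (N + b) := by exact_mod_cast hab
      omega
    case hf =>
      intro k
      have hle : (N : ℤ) ≤ 2 * (N + k) := by omega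
      have heven : Even (2 * (N + k) : ℤ) := ⟨N + k, by ring⟩
      have := (h _ hle).1 heven
      simp only [Set.mem_setOf_eq, Polynomial.IsRoot, hq, Polynomial.eval_sub,
        Polynomial.eval_add, Polynomial.eval_mul, Polynomial.eval_pow,
        Polynomial.eval_X, Polynomial.eval_ofNat]
      push_cast at this ⊢
      rw [this]
      ring
  have hle : (N : ℤ) ≤ 2 * N + 1 := by omega
  have hodd : Odd (2 * (N : ℤ) + 1) := ⟨N, by ring⟩
  have h1 := (h _ hle).2 hodd
  have h2 : q.eval ((2 * (N : ℤ) + 1 : ℤ) : ℝ) = 0 := by rw [hq0]; simp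
  rw [hq] at h2
  simp only [Polynomial.eval_sub, Polynomial.eval_add, Polynomial.eval_mul,
    Polynomial.eval_pow, Polynomial.eval_X, Polynomial.eval_ofNat] at h2
  rw [h1] at h2
  norm_num at h2
end

section
/- Let m ≥ 4 and let σ_{ij}, 1 ≤ i < j ≤ 4, be six permutations of {1,…,m}. For each of the four triangles of K₄ define its triangle count (e.g., for triangle {1,2,3}: t = #{x : σ₂₃(σ₁₂(x)) = σ₁₃(x)}), and for each of the three 4-cycles of K₄ define its cycle count (e.g., for the 4-cycle 1,2,3,4: q = #{x : σ₁₄⁻¹(σ₃₄(σ₂₃(σ₁₂(x)))) = x}). If all four triangle counts are 0 and all three 4-cycle counts equal m, then the number of tuples (x₁,x₂,x₃,x₄) ∈ {1,…,m}⁴ with x_j ≠ σ_{ij}(x_i) for all i < j equals m⁴ − 6m³ + 15m² − 13m. -/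
open Finset

lemma aux_count_not_mem (m : ℕ) (s : Finset (Fin m)) :
    (∑ y : Fin m, if y ∉ s then (1:ℤ) else 0) = m - s.card := by
  rw [Finset.sum_boole]
  have h1 : (univ.filter (fun y : Fin m => y ∉ s)) = univ \ s := by
    ext y; simp
  rw [h1, Finset.card_sdiff_of_subset (Finset.subset_univ s)]
  have : s.card ≤ (univ : Finset (Fin m)).card := Finset.card_le_univ s
  push_cast [Nat.cast_sub this]
  simp

lemma aux_sum_ite_const_mul (m : ℕ) (p : Fin m → Prop) [DecidablePred p] (c : ℤ) :
    (∑ y : Fin m, if p y then c else 0) = c * (∑ y : Fin m, if p y then (1:ℤ) else 0) := by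
  rw [Finset.mul_sum]
  refine Finset.sum_congr rfl fun y _ => ?_
  split_ifs <;> ring

lemma aux_y4 (m : ℕ) (a b c : Fin m) :
    (∑ y : Fin m, if y ≠ a ∧ y ≠ b ∧ y ≠ c then (1:ℤ) else 0)
      = m - ({a, b, c} : Finset (Fin m)).card := by
  rw [← aux_count_not_mem m ({a,b,c} : Finset (Fin m))]
  refine Finset.sum_congr rfl fun y _ => ?_
  congr 1
  simp [not_or]

lemma aux_y2 (m : ℕ) (a b : Fin m) :
    (∑ y : Fin m, if y ≠ a ∧ y ≠ b then (1:ℤ) else 0)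
      = m - ({a, b} : Finset (Fin m)).card := by
  rw [← aux_count_not_mem m ({a,b} : Finset (Fin m))]
  refine Finset.sum_congr rfl fun y _ => ?_
  congr 1
  simp [not_or]

lemma aux_y1 (m : ℕ) (a : Fin m) :
    (∑ y : Fin m, if y ≠ a then (1:ℤ) else 0) = m - 1 := by
  have := aux_count_not_mem m ({a} : Finset (Fin m))
  simp only [Finset.card_singleton, Nat.cast_one, Finset.mem_singleton] at this
  rw [← this]

lemma hval1 (m : ℕ) (τ : Fin m → Fin m) (hfpf : ∀ y, τ y ≠ y) (hinv : ∀ y, τ (τ y) = y)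
    (y1 y2 : Fin m) (h12 : y1 = τ y2) :
    (∑ y3 : Fin m, if y3 ≠ y1 ∧ y3 ≠ τ y2 then
        ((m:ℤ) - ({y1, τ y2, τ y3} : Finset (Fin m)).card) else 0)
      = ((m:ℤ)-1)*((m:ℤ)-2)+1 := by
  have hpt : ∀ y3 : Fin m,
      (if y3 ≠ y1 ∧ y3 ≠ τ y2 then ((m:ℤ) - ({y1, τ y2, τ y3} : Finset (Fin m)).card) else 0)
        = (if y3 ≠ y1 then ((m:ℤ)-2) else 0) + (if y3 = τ y1 then 1 else 0) := by
    intro y3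
    rw [← h12]
    by_cases hA : y3 = τ y1
    · have h1 : τ y3 = y1 := by rw [hA, hinv]
      have h2 : y3 ≠ y1 := by rw [hA]; exact hfpf y1
      have hcard : ({y1, y1, τ y3} : Finset (Fin m)).card = 1 := by
        rw [h1]; simp
      rw [if_pos ⟨h2, h2⟩, if_pos h2, if_pos hA, hcard]
      push_cast; ring
    · by_cases hB : y3 = y1
      · rw [if_neg (by simp [hB]), if_neg (by simp [hB]), if_neg hA]
        simp
      · have h1 : τ y3 ≠ y1 := fun h => hA (by rw [← h, hinv])
        have hcard : ({y1, y1, τ y3} : Finset (Fin m)).card = 2 := by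
          rw [Finset.insert_idem]
          exact Finset.card_pair (fun h => h1 h.symm)
        rw [if_pos ⟨hB, hB⟩, if_pos hB, if_neg hA, hcard]
        push_cast; ring
  rw [Finset.sum_congr rfl (fun y3 _ => hpt y3), Finset.sum_add_distrib,
    aux_sum_ite_const_mul, aux_y1]
  rw [Finset.sum_ite_eq' Finset.univ (τ y1) (fun _ => (1:ℤ))]
  simp only [Finset.mem_univ, if_pos]
  ring

lemma hval2 (m : ℕ) (τ : Fin m → Fin m) (hfpf : ∀ y, τ y ≠ y) (hinv : ∀ y, τ (τ y) = y)
    (y1 y2 : Fin m) (hney : y2 ≠ y1) (h12 : y1 ≠ τ y2) :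
    (∑ y3 : Fin m, if y3 ≠ y1 ∧ y3 ≠ τ y2 then
        ((m:ℤ) - ({y1, τ y2, τ y3} : Finset (Fin m)).card) else 0)
      = ((m:ℤ)-2)*((m:ℤ)-3)+2 := by
  have hinj : Function.Injective τ := by
    intro a b h
    rw [← hinv a, h, hinv]
  have hne1 : τ y1 ≠ y1 := hfpf y1
  have hne2 : τ y1 ≠ τ y2 := fun h => hney (hinj h).symm
  have hne3 : y2 ≠ τ y2 := fun h => hfpf y2 h.symm
  have hne4 : τ y1 ≠ y2 := fun h => h12 (by rw [← h, hinv])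
  have hpt : ∀ y3 : Fin m,
      (if y3 ≠ y1 ∧ y3 ≠ τ y2 then ((m:ℤ) - ({y1, τ y2, τ y3} : Finset (Fin m)).card) else 0)
        = (if y3 ≠ y1 ∧ y3 ≠ τ y2 then ((m:ℤ)-3) else 0)
          + (if y3 = τ y1 then 1 else 0) + (if y3 = y2 then 1 else 0) := by
    intro y3
    by_cases hA : y3 = τ y1
    · have h1 : τ y3 = y1 := by rw [hA, hinv]
      have hcard : ({y1, τ y2, τ y3} : Finset (Fin m)).card = 2 := by
        rw [h1]
        rw [show ({y1, τ y2, y1} : Finset (Fin m)) = {y1, τ y2} by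
          ext z; simp only [Finset.mem_insert, Finset.mem_singleton]; tauto]
        exact Finset.card_pair h12
      have hA2 : y3 ≠ y2 := by rw [hA]; exact hne4
      have hc1 : y3 ≠ y1 := by rw [hA]; exact hne1
      have hc2 : y3 ≠ τ y2 := by rw [hA]; exact hne2
      rw [if_pos ⟨hc1, hc2⟩, if_pos ⟨hc1, hc2⟩, if_pos hA, if_neg hA2, hcard]
      push_cast; ring
    · by_cases hB : y3 = y2
      · have hcard : ({y1, τ y2, τ y3} : Finset (Fin m)).card = 2 := by
          rw [hB]
          rw [show ({y1, τ y2, τ y2} : Finset (Fin m)) = {y1, τ y2} by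
            ext z; simp only [Finset.mem_insert, Finset.mem_singleton]; tauto]
          exact Finset.card_pair h12
        have hc1 : y3 ≠ y1 := by rw [hB]; exact hney
        have hc2 : y3 ≠ τ y2 := by rw [hB]; exact hne3
        rw [if_pos ⟨hc1, hc2⟩, if_pos ⟨hc1, hc2⟩, if_neg hA, if_pos hB, hcard]
        push_cast; ring
      · by_cases hC : y3 ≠ y1 ∧ y3 ≠ τ y2
        · have h1 : τ y3 ≠ y1 := fun h => hA (by rw [← h, hinv])
          have h2 : τ y3 ≠ τ y2 := fun h => hB (hinj h)
          have hmem : y1 ∉ ({τ y2, τ y3} : Finset (Fin m)) := by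
            simp only [Finset.mem_insert, Finset.mem_singleton]
            push_neg
            exact ⟨h12, fun h => h1 h.symm⟩
          have hcard : ({y1, τ y2, τ y3} : Finset (Fin m)).card = 3 := by
            rw [Finset.card_insert_of_notMem hmem,
              Finset.card_pair (fun h => h2 h.symm)]
          rw [if_pos hC, if_pos hC, if_neg hA, if_neg hB, hcard]
          push_cast; ring
        · rw [if_neg hC, if_neg hC, if_neg hA, if_neg hB]
          simp
  rw [Finset.sum_congr rfl (fun y3 _ => hpt y3), Finset.sum_add_distrib,
    Finset.sum_add_distrib, aux_sum_ite_const_mul]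
  have h2 : (∑ y : Fin m, if y ≠ y1 ∧ y ≠ τ y2 then (1:ℤ) else 0) = (m:ℤ) - 2 := by
    rw [aux_y2, Finset.card_pair h12]
    push_cast; ring
  rw [h2, Finset.sum_ite_eq' Finset.univ (τ y1) (fun _ => (1:ℤ)),
    Finset.sum_ite_eq' Finset.univ y2 (fun _ => (1:ℤ))]
  simp only [Finset.mem_univ, if_pos]
  ring

lemma count_main (m : ℕ) (τ : Fin m → Fin m) (hfpf : ∀ y, τ y ≠ y)
    (hinv : ∀ y, τ (τ y) = y) :
    ((Finset.univ.filter (fun p : Fin m × Fin m × Fin m × Fin m =>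
        p.2.1 ≠ p.1 ∧ (p.2.2.1 ≠ p.1 ∧ p.2.2.1 ≠ τ p.2.1) ∧
        (p.2.2.2 ≠ p.1 ∧ p.2.2.2 ≠ τ p.2.1 ∧ p.2.2.2 ≠ τ p.2.2.1))).card : ℤ)
      = (m:ℤ)^4 - 6*(m:ℤ)^3 + 15*(m:ℤ)^2 - 13*(m:ℤ) := by
  have hinj : Function.Injective τ := by
    intro a b h
    rw [← hinv a, h, hinv]
  rw [Finset.card_filter]
  push_cast
  rw [Fintype.sum_prod_type]
  simp only [Fintype.sum_prod_type]
  have step1 : ∀ y1 y2 : Fin m,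
      (∑ y3 : Fin m, ∑ y4 : Fin m,
        if (y2 ≠ y1 ∧ (y3 ≠ y1 ∧ y3 ≠ τ y2) ∧ (y4 ≠ y1 ∧ y4 ≠ τ y2 ∧ y4 ≠ τ y3))
          then (1:ℤ) else 0)
      = if y2 ≠ y1 then
          (if y1 = τ y2 then ((m:ℤ)-1)*((m:ℤ)-2)+1 else ((m:ℤ)-2)*((m:ℤ)-3)+2)
        else 0 := by
    intro y1 y2
    by_cases hA : y2 ≠ y1
    · rw [if_pos hA]
      have inner : ∀ y3 : Fin m,
          (∑ y4 : Fin m,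
            if (y2 ≠ y1 ∧ (y3 ≠ y1 ∧ y3 ≠ τ y2) ∧ (y4 ≠ y1 ∧ y4 ≠ τ y2 ∧ y4 ≠ τ y3))
              then (1:ℤ) else 0)
          = if y3 ≠ y1 ∧ y3 ≠ τ y2 then
              ((m:ℤ) - ({y1, τ y2, τ y3} : Finset (Fin m)).card) else 0 := by
        intro y3
        by_cases hB : y3 ≠ y1 ∧ y3 ≠ τ y2
        · rw [if_pos hB, ← aux_y4 m y1 (τ y2) (τ y3)]
          refine Finset.sum_congr rfl fun y4 _ => ?_
          refine if_congr ?_ rfl rfl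
          tauto
        · rw [if_neg hB]
          refine Finset.sum_eq_zero fun y4 _ => ?_
          rw [if_neg]
          tauto
      rw [Finset.sum_congr rfl (fun y3 _ => inner y3)]
      by_cases h12 : y1 = τ y2
      · rw [if_pos h12, hval1 m τ hfpf hinv y1 y2 h12]
      · rw [if_neg h12, hval2 m τ hfpf hinv y1 y2 hA h12]
    · rw [if_neg hA]
      refine Finset.sum_eq_zero fun y3 _ => ?_
      refine Finset.sum_eq_zero fun y4 _ => ?_
      rw [if_neg]
      tauto
  rw [Finset.sum_congr rfl (fun y1 _ => Finset.sum_congr rfl (fun y2 _ => step1 y1 y2))]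
  have step2 : ∀ y1 y2 : Fin m,
      (if y2 ≠ y1 then
          (if y1 = τ y2 then ((m:ℤ)-1)*((m:ℤ)-2)+1 else ((m:ℤ)-2)*((m:ℤ)-3)+2)
        else 0)
      = (if y2 = τ y1 then ((m:ℤ)-1)*((m:ℤ)-2)+1 else 0)
        + (if y2 ≠ y1 ∧ y2 ≠ τ y1 then ((m:ℤ)-2)*((m:ℤ)-3)+2 else 0) := by
    intro y1 y2
    by_cases hE : y2 = τ y1
    · have h1 : y1 = τ y2 := by rw [hE, hinv]
      have h2 : y2 ≠ y1 := by rw [hE]; exact hfpf y1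
      rw [if_pos h2, if_pos h1, if_pos hE, if_neg (by tauto)]
      ring
    · have h1 : ¬ y1 = τ y2 := fun h => hE (by rw [h, hinv])
      by_cases h2 : y2 ≠ y1
      · rw [if_pos h2, if_neg h1, if_neg hE, if_pos ⟨h2, hE⟩]
        ring
      · rw [if_neg h2, if_neg hE, if_neg (by tauto)]
        ring
  rw [Finset.sum_congr rfl (fun y1 _ => Finset.sum_congr rfl (fun y2 _ => step2 y1 y2))]
  have step3 : ∀ y1 : Fin m,
      (∑ y2 : Fin m,
        ((if y2 = τ y1 then ((m:ℤ)-1)*((m:ℤ)-2)+1 else 0)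
          + (if y2 ≠ y1 ∧ y2 ≠ τ y1 then ((m:ℤ)-2)*((m:ℤ)-3)+2 else 0)))
      = (((m:ℤ)-1)*((m:ℤ)-2)+1) + (((m:ℤ)-2)*((m:ℤ)-3)+2) * ((m:ℤ)-2) := by
    intro y1
    rw [Finset.sum_add_distrib,
      Finset.sum_ite_eq' Finset.univ (τ y1) (fun _ => ((m:ℤ)-1)*((m:ℤ)-2)+1),
      aux_sum_ite_const_mul]
    have h2 : (∑ y : Fin m, if y ≠ y1 ∧ y ≠ τ y1 then (1:ℤ) else 0) = (m:ℤ) - 2 := by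
      rw [aux_y2, Finset.card_pair (fun h => hfpf y1 h.symm)]
      push_cast; ring
    rw [h2]
    simp only [Finset.mem_univ, if_pos]
  rw [Finset.sum_congr rfl (fun y1 _ => step3 y1), Finset.sum_const, Finset.card_univ,
    Fintype.card_fin]
  ring

/-- If all four triangle counts of a full `m`-fold cover of `K₄` are `0` and all
three `4`-cycle counts equal `m`, then the number of proper colorings equals
`m⁴ - 6m³ + 15m² - 13m`. -/
theorem dual_DP_K4_extremal_characterization
    (m : ℕ) (hm : 4 ≤ m) (σ12 σ13 σ14 σ23 σ24 σ34 : Equiv.Perm (Fin m))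
    (ht1 : (Finset.univ.filter (fun x : Fin m => σ23 (σ12 x) = σ13 x)).card = 0)
    (ht2 : (Finset.univ.filter (fun x : Fin m => σ24 (σ12 x) = σ14 x)).card = 0)
    (ht3 : (Finset.univ.filter (fun x : Fin m => σ34 (σ13 x) = σ14 x)).card = 0)
    (ht4 : (Finset.univ.filter (fun x : Fin m => σ34 (σ23 x) = σ24 x)).card = 0)
    (hq1 : (Finset.univ.filter
        (fun x : Fin m => σ14.symm (σ34 (σ23 (σ12 x))) = x)).card = m)
    (hq2 : (Finset.univ.filter
        (fun x : Fin m => σ13.symm (σ34.symm (σ24 (σ12 x))) = x)).card = m)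
    (hq3 : (Finset.univ.filter
        (fun x : Fin m => σ14.symm (σ24 (σ23.symm (σ13 x))) = x)).card = m) :
    ((Finset.univ.filter (fun p : Fin m × Fin m × Fin m × Fin m =>
        p.2.1 ≠ σ12 p.1 ∧ p.2.2.1 ≠ σ13 p.1 ∧ p.2.2.2 ≠ σ14 p.1 ∧
        p.2.2.1 ≠ σ23 p.2.1 ∧ p.2.2.2 ≠ σ24 p.2.1 ∧ p.2.2.2 ≠ σ34 p.2.2.1)).card : ℤ)
      = (m : ℤ) ^ 4 - 6 * (m : ℤ) ^ 3 + 15 * (m : ℤ) ^ 2 - 13 * m := by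
  -- extract pointwise statements from the card hypotheses
  have huniv : ∀ (p : Fin m → Prop) [DecidablePred p],
      (Finset.univ.filter p).card = m → ∀ x, p x := by
    intro p _ h x
    have he : Finset.univ.filter p = Finset.univ :=
      Finset.eq_univ_of_card _ (by rw [h, Fintype.card_fin])
    exact (Finset.mem_filter.mp (he ▸ Finset.mem_univ x)).2
  have hzero : ∀ (p : Fin m → Prop) [DecidablePred p],
      (Finset.univ.filter p).card = 0 → ∀ x, ¬ p x := by
    intro p _ h x hx
    rw [Finset.card_eq_zero] at h
    exact Finset.notMem_empty x
      (h ▸ Finset.mem_filter.mpr ⟨Finset.mem_univ x, hx⟩)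
  have hT1 : ∀ x : Fin m, σ23 (σ12 x) ≠ σ13 x := hzero _ ht1
  have hA : ∀ x : Fin m, σ34 (σ23 (σ12 x)) = σ14 x := by
    intro x
    exact (Equiv.symm_apply_eq σ14).mp (huniv _ hq1 x)
  have hB : ∀ x : Fin m, σ24 (σ12 x) = σ34 (σ13 x) := by
    intro x
    have h := huniv _ hq2 x
    rw [Equiv.symm_apply_eq] at h
    rw [Equiv.symm_apply_eq] at h
    exact h
  have hC : ∀ x : Fin m, σ24 (σ23.symm (σ13 x)) = σ14 x := by
    intro x
    exact (Equiv.symm_apply_eq σ14).mp (huniv _ hq3 x)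
  -- the key permutation τ
  set τ : Fin m → Fin m := fun y => σ13.symm (σ23 (σ12 y)) with hτ
  have hτ13 : ∀ y, σ13 (τ y) = σ23 (σ12 y) := fun y => Equiv.apply_symm_apply _ _
  have hfpf : ∀ y, τ y ≠ y := by
    intro y h
    exact hT1 y ((Equiv.symm_apply_eq σ13).mp h)
  have hD : ∀ y, σ14 (τ y) = σ24 (σ12 y) := by
    intro y
    have h := hC (τ y)
    rw [hτ13 y, Equiv.symm_apply_apply] at h
    exact h.symm
  have hinv : ∀ y, τ (τ y) = y := by
    intro y
    have h1 : σ34 (σ23 (σ12 (τ y))) = σ14 (τ y) := hA (τ y)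
    rw [hD y, hB y] at h1
    have h2 : σ23 (σ12 (τ y)) = σ13 y := σ34.injective h1
    show σ13.symm (σ23 (σ12 (τ y))) = y
    rw [h2, Equiv.symm_apply_apply]
  have hE3 : ∀ y, σ14 (τ y) = σ34 (σ13 y) := fun y => by rw [hD y, hB y]
  -- change of variables
  have hcard :
      (Finset.univ.filter (fun p : Fin m × Fin m × Fin m × Fin m =>
        p.2.1 ≠ p.1 ∧ (p.2.2.1 ≠ p.1 ∧ p.2.2.1 ≠ τ p.2.1) ∧
        (p.2.2.2 ≠ p.1 ∧ p.2.2.2 ≠ τ p.2.1 ∧ p.2.2.2 ≠ τ p.2.2.1))).card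
      = (Finset.univ.filter (fun p : Fin m × Fin m × Fin m × Fin m =>
        p.2.1 ≠ σ12 p.1 ∧ p.2.2.1 ≠ σ13 p.1 ∧ p.2.2.2 ≠ σ14 p.1 ∧
        p.2.2.1 ≠ σ23 p.2.1 ∧ p.2.2.2 ≠ σ24 p.2.1 ∧ p.2.2.2 ≠ σ34 p.2.2.1)).card := by
    refine Finset.card_equiv
      ((Equiv.refl (Fin m)).prodCongr (σ12.prodCongr (σ13.prodCongr σ14))) ?_
    rintro ⟨y1, y2, y3, y4⟩
    simp only [Finset.mem_filter, Finset.mem_univ, true_and, Equiv.prodCongr_apply,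
      Equiv.coe_refl, Prod.map_apply, id_eq]
    have e1 : σ23 (σ12 y2) = σ13 (τ y2) := (hτ13 y2).symm
    have e2 : σ24 (σ12 y2) = σ14 (τ y2) := (hD y2).symm
    have e3 : σ34 (σ13 y3) = σ14 (τ y3) := (hE3 y3).symm
    rw [e1, e2, e3]
    simp only [ne_eq, EmbeddingLike.apply_eq_iff_eq]
    tauto
  rw [← hcard]
  exact count_main m τ hfpf hinv
end
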